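/- arXiv:1611.08904 — 3 statements merged into one kernel-verified Lean document; each statement's English description precedes it below -/
import Mathlib

section
/- For any subsets I, J of {1,...,n-1} and any two permutations π, π' in S_n with the same descent set, the number of factorizations π = στ with Des(σ) = I and Des(τ) = J equals the number of factorizations π' = σ'τ' with Des(σ') = I and Des(τ') = J. -/
open scoped Classical

noncomputable section

/-- Descent set of a permutation of `Fin n`, as a subset of `{1, ..., n-1}`
(1-indexed: `i` is a descent of `π` iff `π(i) > π(i+1)`). -/
def permDes {n : ℕ} (σ : Equiv.Perm (Fin n)) : Finset ℕ :=
  (Finset.Icc 1 (n - 1)).filter fun i =>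
    ∃ h : i < n, σ ⟨i, h⟩ < σ ⟨i - 1, by omega⟩

namespace DescentAux

open Finset Equiv

variable {n : ℕ}

/-- block index function of a subset `A`. -/
def cf (A : Finset ℕ) (p : ℕ) : ℕ := (A ∩ Finset.Icc 1 p).card

lemma cf_mono (A : Finset ℕ) : Monotone (cf A) := fun p q h =>
  Finset.card_le_card (Finset.inter_subset_inter le_rfl (Finset.Icc_subset_Icc le_rfl h))

lemma cf_le (A : Finset ℕ) (p : ℕ) : cf A p ≤ p :=
  le_trans (Finset.card_le_card Finset.inter_subset_right) (by simp [Nat.card_Icc])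

lemma cf_eq_of_not_mem {A : Finset ℕ} {p : ℕ} (h : p ∉ A) : cf A (p - 1) = cf A p := by
  unfold cf
  congr 1
  ext x
  simp only [Finset.mem_inter, Finset.mem_Icc]
  constructor
  · rintro ⟨hA, h1, h2⟩; exact ⟨hA, h1, by omega⟩
  · rintro ⟨hA, h1, h2⟩
    have : x ≠ p := fun e => h (e ▸ hA)
    exact ⟨hA, h1, by omega⟩

lemma cf_lt_of_mem {A : Finset ℕ} {p : ℕ} (h1 : 1 ≤ p) (h : p ∈ A) :
    cf A (p - 1) < cf A p := by
  apply Finset.card_lt_card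
  constructor
  · exact Finset.inter_subset_inter le_rfl (Finset.Icc_subset_Icc le_rfl (by omega))
  · intro hsub
    have hp : p ∈ A ∩ Finset.Icc 1 p := by simp [h, h1]
    have := hsub hp
    simp only [Finset.mem_inter, Finset.mem_Icc] at this
    omega

lemma mem_permDes_iff {σ : Equiv.Perm (Fin n)} {i : ℕ} :
    i ∈ permDes σ ↔ 1 ≤ i ∧ i ≤ n - 1 ∧
      ∃ h : i < n, σ ⟨i, h⟩ < σ ⟨i - 1, by omega⟩ := by
  simp [permDes, Finset.mem_filter, Finset.mem_Icc, and_assoc]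

lemma permDes_subset_iff {σ : Equiv.Perm (Fin n)} {A : Finset ℕ} :
    permDes σ ⊆ A ↔ ∀ i : ℕ, ∀ _h1 : 1 ≤ i, ∀ _h2 : i ≤ n - 1, i ∉ A →
      σ ⟨i - 1, by omega⟩ < σ ⟨i, by omega⟩ := by
  constructor
  · intro hs i h1 h2 hA
    by_contra hlt
    push_neg at hlt
    have hne : σ ⟨i, by omega⟩ ≠ σ ⟨i - 1, by omega⟩ := by
      intro he
      have := σ.injective he
      simp only [Fin.mk.injEq] at this
      omega
    have hd : σ ⟨i, by omega⟩ < σ ⟨i - 1, by omega⟩ := lt_of_le_of_ne hlt hne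
    exact hA (hs (mem_permDes_iff.mpr ⟨h1, h2, by omega, hd⟩))
  · intro h i hi
    rw [mem_permDes_iff] at hi
    obtain ⟨h1, h2, hn, hd⟩ := hi
    by_contra hA
    exact absurd (h i h1 h2 hA) (not_lt.2 hd.le)

lemma step_lt {σ : Equiv.Perm (Fin n)} {A : Finset ℕ} (hs : permDes σ ⊆ A) {q : ℕ}
    (h1 : 1 ≤ q) (h2 : q < n) (hc : cf A (q - 1) = cf A q) :
    σ ⟨q - 1, by omega⟩ < σ ⟨q, h2⟩ := by
  have hqA : q ∉ A := fun hq => absurd (cf_lt_of_mem h1 hq) (by omega)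
  exact permDes_subset_iff.mp hs q h1 (by omega) hqA

lemma increasing_on_blocks {σ : Equiv.Perm (Fin n)} {A : Finset ℕ} (hs : permDes σ ⊆ A) :
    ∀ p q : Fin n, p < q → cf A p = cf A q → σ p < σ q := by
  suffices H : ∀ d : ℕ, ∀ p q : Fin n, (q : ℕ) = p + d + 1 → cf A p = cf A q → σ p < σ q by
    intro p q hpq hc
    exact H ((q : ℕ) - p - 1) p q (by have := hpq; omega) hc
  intro d
  induction d with
  | zero =>
    intro p q hq hc
    have h := step_lt hs (q := (q : ℕ)) (by omega) q.isLt (by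
      have : (q : ℕ) - 1 = (p : ℕ) := by omega
      rw [this]; exact hc)
    have hp : (⟨(q : ℕ) - 1, by omega⟩ : Fin n) = p := by
      apply Fin.ext; simp; omega
    have hq' : (⟨(q : ℕ), q.isLt⟩ : Fin n) = q := by apply Fin.ext; simp
    rwa [hp, hq'] at h
  | succ d ih =>
    intro p q hq hc
    set q1 : Fin n := ⟨(q : ℕ) - 1, by omega⟩ with hq1
    have hmono1 : cf A p ≤ cf A q1 := cf_mono A (by simp only [hq1, Fin.val_mk]; omega)
    have hmono2 : cf A (q1 : ℕ) ≤ cf A q := cf_mono A (by simp only [hq1, Fin.val_mk]; omega)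
    have hce1 : cf A p = cf A q1 := by omega
    have hce2 : cf A (q1 : ℕ) = cf A q := by omega
    have hlt1 : σ p < σ q1 := ih p q1 (by simp only [hq1, Fin.val_mk]; omega) hce1
    have h := step_lt hs (q := (q : ℕ)) (by omega) q.isLt (by
      have : (q : ℕ) - 1 = (q1 : ℕ) := by simp only [hq1, Fin.val_mk]
      rw [this]; exact hce2)
    have hq' : (⟨(q : ℕ), q.isLt⟩ : Fin n) = q := by apply Fin.ext; simp
    rw [hq'] at h
    exact lt_trans hlt1 h

lemma lt_iff_key {σ : Equiv.Perm (Fin n)} {A : Finset ℕ} (hs : permDes σ ⊆ A)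
    {p q : Fin n} (hne : p ≠ q) :
    p < q ↔ (cf A p < cf A q ∨ (cf A p = cf A q ∧ σ p < σ q)) := by
  constructor
  · intro hpq
    rcases lt_or_eq_of_le (cf_mono A (le_of_lt (show (p:ℕ) < q from hpq))) with h | h
    · exact Or.inl h
    · exact Or.inr ⟨h, increasing_on_blocks hs p q hpq h⟩
  · intro hor
    rcases lt_trichotomy p q with h | h | h
    · exact h
    · exact absurd h hne
    · exfalso
      rcases lt_or_eq_of_le (cf_mono A (le_of_lt (show (q:ℕ) < p from h))) with h2 | h2
      · rcases hor with h3 | ⟨h3, _⟩ <;> omega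
      · have := increasing_on_blocks hs q p h h2
        rcases hor with h3 | ⟨h3, h4⟩
        · omega
        · exact absurd h4 (not_lt.2 this.le)


lemma card_filter_comp' (e : Equiv.Perm (Fin n)) (P Q : Fin n → Prop) [DecidablePred P]
    [DecidablePred Q] (h : ∀ i, P i ↔ Q (e i)) :
    (Finset.univ.filter P).card = (Finset.univ.filter Q).card := by
  apply Finset.card_bij' (fun i _ => e i) (fun p _ => e.symm p)
  · intro a ha; simp only [Finset.mem_filter, Finset.mem_univ, true_and] at ha ⊢
    exact (h a).mp ha
  · intro a ha; simp only [Finset.mem_filter, Finset.mem_univ, true_and] at ha ⊢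
    exact (h _).mpr (by simpa using ha)
  · intro a _; simp
  · intro a _; simp

lemma card_filter_comp (e : Equiv.Perm (Fin n)) (P : Fin n → Prop) :
    (Finset.univ.filter fun i => P (e i)).card = (Finset.univ.filter P).card := by
  apply Finset.card_bij' (fun i _ => e i) (fun p _ => e.symm p)
  · intro a ha; simp at ha ⊢; exact ha
  · intro a ha; simp at ha ⊢; exact ha
  · intro a _; simp
  · intro a _; simp

lemma lower_card {S : Finset (Fin n)} (h : ∀ a b : Fin n, a ≤ b → b ∈ S → a ∈ S)
    (q : Fin n) : q ∈ S ↔ (q : ℕ) < S.card := by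
  constructor
  · intro hq
    have hsub : Finset.Iic q ⊆ S := fun a ha => h a q (Finset.mem_Iic.mp ha) hq
    have := Finset.card_le_card hsub
    rw [Fin.card_Iic] at this
    omega
  · intro hq
    by_contra hqS
    have hsub : S ⊆ Finset.Iio q := by
      intro a ha
      rw [Finset.mem_Iio]
      by_contra hax
      exact hqS (h q a (not_lt.mp hax) ha)
    have := Finset.card_le_card hsub
    rw [Fin.card_Iio] at this
    omega

lemma card_filter_lt (f : Fin n → ℕ) (j : ℕ) :
    (Finset.univ.filter fun p => f p < j).card
      = ∑ j' ∈ Finset.range j, (Finset.univ.filter fun p => f p = j').card := by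
  rw [Finset.card_eq_sum_card_fiberwise (f := f) (t := Finset.range j)
    (fun x hx => by simp at hx ⊢; exact hx)]
  refine Finset.sum_congr rfl fun j' hj' => ?_
  congr 1
  rw [Finset.mem_range] at hj'
  ext p
  simp only [Finset.mem_filter, Finset.mem_univ, true_and]
  constructor
  · rintro ⟨_, h2⟩; exact h2
  · intro h2; exact ⟨by omega, h2⟩

lemma mono_fiber_eq {f₁ f₂ : Fin n → ℕ} (h₁ : Monotone f₁) (h₂ : Monotone f₂)
    (h : ∀ j, (Finset.univ.filter fun p => f₁ p = j).card
      = (Finset.univ.filter fun p => f₂ p = j).card) : f₁ = f₂ := by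
  have hlt : ∀ j, (Finset.univ.filter fun p => f₁ p < j).card
      = (Finset.univ.filter fun p => f₂ p < j).card := by
    intro j
    rw [card_filter_lt, card_filter_lt]
    exact Finset.sum_congr rfl fun j' _ => h j'
  have key : ∀ (f : Fin n → ℕ), Monotone f → ∀ (j : ℕ) (q : Fin n),
      f q < j ↔ (q : ℕ) < (Finset.univ.filter fun p => f p < j).card := by
    intro f hf j q
    have hl := lower_card (S := Finset.univ.filter fun p => f p < j)
      (fun a b hab hb => by
        simp only [Finset.mem_filter, Finset.mem_univ, true_and] at hb ⊢
        exact lt_of_le_of_lt (hf hab) hb) q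
    simpa using hl
  funext p
  have e1 : ∀ j, f₁ p < j ↔ f₂ p < j := by
    intro j
    rw [key f₁ h₁ j p, key f₂ h₂ j p, hlt j]
  have a1 := (e1 (f₂ p + 1)).mpr (by omega)
  have a2 := (e1 (f₁ p + 1)).mp (by omega)
  omega

/-- the condition on block-index functions, depending only on the descent set `D` of `π`. -/
def gcond (n : ℕ) (D A B : Finset ℕ) (g : Fin n → ℕ) : Prop :=
  (∀ j : ℕ, (Finset.univ.filter fun i => g i = j).card
      = (Finset.univ.filter fun p : Fin n => cf A (p : ℕ) = j).card) ∧
  ∀ i : ℕ, ∀ _h1 : 1 ≤ i, ∀ _h2 : i ≤ n - 1, i ∉ B →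
    (g ⟨i - 1, by omega⟩ < g ⟨i, by omega⟩ ∨
      (g ⟨i - 1, by omega⟩ = g ⟨i, by omega⟩ ∧ i ∉ D))

lemma phi_mem (π : Equiv.Perm (Fin n)) {σ : Equiv.Perm (Fin n)} {A B : Finset ℕ}
    (hσA : permDes σ ⊆ A) (hσB : permDes (σ⁻¹ * π) ⊆ B) :
    gcond n (permDes π) A B (fun i => cf A (((σ⁻¹ * π) i : Fin n) : ℕ)) := by
  constructor
  · intro j
    exact card_filter_comp' (σ⁻¹ * π) _ _ (fun i => Iff.rfl)
  · intro i h1 h2 hB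
    have hρ : (σ⁻¹ * π) ⟨i - 1, by omega⟩ < (σ⁻¹ * π) ⟨i, by omega⟩ :=
      permDes_subset_iff.mp hσB i h1 h2 hB
    have hρ' : σ⁻¹ (π ⟨i - 1, by omega⟩) < σ⁻¹ (π ⟨i, by omega⟩) := hρ
    have hne : σ⁻¹ (π ⟨i - 1, by omega⟩) ≠ σ⁻¹ (π ⟨i, by omega⟩) := ne_of_lt hρ'
    have key := (lt_iff_key hσA hne).mp hρ'
    simp only [Equiv.Perm.coe_inv, Equiv.apply_symm_apply] at key
    rcases key with hlt | ⟨heq, hlt⟩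
    · left
      simpa [Equiv.Perm.mul_apply] using hlt
    · right
      constructor
      · simpa [Equiv.Perm.mul_apply] using heq
      · intro hD
        rw [mem_permDes_iff] at hD
        obtain ⟨_, _, _, hd⟩ := hD
        exact absurd hlt (not_lt.2 hd.le)

set_option maxHeartbeats 1000000 in
lemma phi_bijective (π : Equiv.Perm (Fin n)) (A B : Finset ℕ) :
    Function.Bijective
      (fun σ : {σ : Equiv.Perm (Fin n) // permDes σ ⊆ A ∧ permDes (σ⁻¹ * π) ⊆ B} =>
        (⟨fun i => cf A (((σ.1⁻¹ * π) i : Fin n) : ℕ), phi_mem π σ.2.1 σ.2.2⟩ :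
          {g : Fin n → ℕ // gcond n (permDes π) A B g})) := by
  constructor
  · rintro ⟨σ, hσA, hσB⟩ ⟨σ', hσ'A, hσ'B⟩ he
    simp only [Subtype.mk.injEq] at he
    have hv : ∀ v : Fin n, cf A ((σ⁻¹ v : Fin n) : ℕ) = cf A ((σ'⁻¹ v : Fin n) : ℕ) := by
      intro v
      have := congrFun he (π⁻¹ v)
      simpa [Equiv.Perm.mul_apply, Equiv.Perm.coe_inv, Equiv.apply_symm_apply] using this
    have hsm : StrictMono (fun x => (σ'⁻¹ * σ) x) := by
      intro p q hpq
      have hne : σ'⁻¹ (σ p) ≠ σ'⁻¹ (σ q) := by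
        intro hcon
        exact absurd (σ.injective ((σ'⁻¹ : Equiv.Perm (Fin n)).injective hcon)) (ne_of_lt hpq)
      show σ'⁻¹ (σ p) < σ'⁻¹ (σ q)
      apply (lt_iff_key hσ'A hne).mpr
      have key1 := (lt_iff_key hσA (ne_of_lt hpq)).mp hpq
      have r1 : cf A ((σ'⁻¹ (σ p) : Fin n) : ℕ) = cf A ((p : Fin n) : ℕ) := by
        have h0 := (hv (σ p)).symm
        simpa [Equiv.Perm.coe_inv, Equiv.symm_apply_apply] using h0
      have r2 : cf A ((σ'⁻¹ (σ q) : Fin n) : ℕ) = cf A ((q : Fin n) : ℕ) := by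
        have h0 := (hv (σ q)).symm
        simpa [Equiv.Perm.coe_inv, Equiv.symm_apply_apply] using h0
      rw [r1, r2]
      simpa [Equiv.Perm.coe_inv, Equiv.apply_symm_apply] using key1
    have hrange : Set.range (fun x => (σ'⁻¹ * σ) x) = Set.range (id : Fin n → Fin n) := by
      rw [Set.range_id]
      exact Set.range_eq_univ.mpr (σ'⁻¹ * σ).surjective
    have hwf : WellFoundedLT (Fin n) := inferInstance
    have hid := (@StrictMono.range_inj (Fin n) (Fin n) _ _ hwf _ _ hsm strictMono_id).mp hrange
    have hσeq : σ = σ' := by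
      apply Equiv.ext
      intro x
      have hx := congrFun hid x
      simp only [Equiv.Perm.mul_apply, id_eq] at hx
      calc σ x = σ' (σ'⁻¹ (σ x)) := (Equiv.apply_symm_apply σ' (σ x)).symm
        _ = σ' x := by rw [hx]
    exact Subtype.ext hσeq
  · rintro ⟨g, hg1, hg2⟩
    set F : Fin n → ℕ ×ₗ Fin n := fun v => toLex (g (π⁻¹ v), v) with hF
    set σ : Equiv.Perm (Fin n) := Tuple.sort F with hσdef
    have hFinj : Function.Injective F := by
      intro v w hvw
      have := congrArg (fun x => (ofLex x).2) hvw
      simpa [hF] using this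
    have hmo : Monotone (F ∘ σ) := Tuple.monotone_sort F
    have hsm : StrictMono (F ∘ σ) := hmo.strictMono_of_injective (hFinj.comp σ.injective)
    have hlt : ∀ p q : Fin n, p < q ↔ F (σ p) < F (σ q) := by
      intro p q
      exact (hsm.lt_iff_lt (a := p) (b := q)).symm
    have hlt2 : ∀ p q : Fin n, p < q ↔
        toLex ((g (π⁻¹ (σ p)) : ℕ), σ p) < toLex ((g (π⁻¹ (σ q)) : ℕ), σ q) := hlt
    have hle2 : ∀ p q : Fin n, p ≤ q →
        toLex ((g (π⁻¹ (σ p)) : ℕ), σ p) ≤ toLex ((g (π⁻¹ (σ q)) : ℕ), σ q) :=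
      fun p q h => hmo h
    clear_value σ F
    clear hlt hsm hmo hFinj hσdef hF F
    have hf1mono : Monotone (fun p : Fin n => g (π⁻¹ (σ p))) := by
      intro p q hpq
      have h1 := hle2 p q hpq
      rw [Prod.Lex.le_iff] at h1
      rcases h1 with h | h
      · exact le_of_lt h
      · exact le_of_eq h.1
    have hfib : ∀ j, (Finset.univ.filter fun p : Fin n => g (π⁻¹ (σ p)) = j).card
        = (Finset.univ.filter fun p : Fin n => cf A (p : ℕ) = j).card := by
      intro j
      rw [← hg1 j]
      exact card_filter_comp' (π⁻¹ * σ) _ _ (fun p => Iff.rfl)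
    have hmain : (fun p : Fin n => g (π⁻¹ (σ p))) = (fun p : Fin n => cf A (p : ℕ)) :=
      mono_fiber_eq hf1mono (fun _ _ h => cf_mono A h) hfib
    have ffσ : ∀ p : Fin n, g (π⁻¹ (σ p)) = cf A (p : ℕ) := fun p => congrFun hmain p
    have hA : permDes σ ⊆ A := by
      rw [permDes_subset_iff]
      intro i h1 h2 hiA
      have hpq : (⟨i - 1, by omega⟩ : Fin n) < ⟨i, by omega⟩ := by
        rw [Fin.mk_lt_mk]; omega
      have h1' := (hlt2 _ _).mp hpq
      rw [Prod.Lex.lt_iff] at h1'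
      have hceq : g (π⁻¹ (σ ⟨i - 1, by omega⟩)) = g (π⁻¹ (σ ⟨i, by omega⟩)) := by
        have e1 := ffσ ⟨i - 1, by omega⟩
        have e2 := ffσ ⟨i, by omega⟩
        simp only [Fin.val_mk] at e1 e2
        have e3 := cf_eq_of_not_mem (A := A) (p := i) hiA
        omega
      rcases h1' with h | h
      · simp only [ofLex_toLex] at h; exact absurd h (by omega)
      · exact h.2
    have hB : permDes (σ⁻¹ * π) ⊆ B := by
      rw [permDes_subset_iff]
      intro i h1 h2 hiB
      show σ⁻¹ (π ⟨i - 1, by omega⟩) < σ⁻¹ (π ⟨i, by omega⟩)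
      have h0 := hlt2 (σ⁻¹ (π ⟨i - 1, by omega⟩)) (σ⁻¹ (π ⟨i, by omega⟩))
      simp only [Equiv.Perm.coe_inv, Equiv.apply_symm_apply, Equiv.symm_apply_apply] at h0
      apply h0.mpr
      rw [Prod.Lex.lt_iff]
      rcases hg2 i h1 h2 hiB with h | ⟨heq, hiD⟩
      · exact Or.inl h
      · refine Or.inr ⟨heq, ?_⟩
        have hne : π ⟨i, by omega⟩ ≠ π ⟨i - 1, by omega⟩ := by
          intro hcon
          have := π.injective hcon
          simp only [Fin.mk.injEq] at this
          omega
        by_contra hc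
        push_neg at hc
        exact hiD (mem_permDes_iff.mpr ⟨h1, h2, by omega, lt_of_le_of_ne hc hne⟩)
    refine ⟨⟨σ, hA, hB⟩, Subtype.ext (funext fun i => ?_)⟩
    show cf A ((σ⁻¹ (π i) : Fin n) : ℕ) = g i
    have h0 := ffσ (σ⁻¹ (π i))
    simp only [Equiv.Perm.coe_inv, Equiv.apply_symm_apply, Equiv.symm_apply_apply] at h0
    exact h0.symm

lemma NL_congr {π π' : Equiv.Perm (Fin n)} (h : permDes π = permDes π') (A B : Finset ℕ) :
    Nat.card {σ : Equiv.Perm (Fin n) // permDes σ ⊆ A ∧ permDes (σ⁻¹ * π) ⊆ B}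
      = Nat.card {σ : Equiv.Perm (Fin n) // permDes σ ⊆ A ∧ permDes (σ⁻¹ * π') ⊆ B} := by
  rw [Nat.card_eq_of_bijective _ (phi_bijective π A B),
    Nat.card_eq_of_bijective _ (phi_bijective π' A B), h]

lemma ncard_subtype {α : Type*} [Fintype α] (p : α → Prop) [DecidablePred p] :
    Nat.card {x // p x} = (Finset.univ.filter p).card := by
  rw [Nat.card_eq_fintype_card, Fintype.card_subtype]

/-- number of `σ` with `Des σ = I` and `Des (σ⁻¹ π) = J`. -/
def NE (π : Equiv.Perm (Fin n)) (I J : Finset ℕ) : ℕ :=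
  Nat.card {σ : Equiv.Perm (Fin n) // permDes σ = I ∧ permDes (σ⁻¹ * π) = J}

lemma NE_eq_filter (π : Equiv.Perm (Fin n)) (I J : Finset ℕ) :
    NE π I J = (Finset.univ.filter fun σ : Equiv.Perm (Fin n) =>
      permDes σ = I ∧ permDes (σ⁻¹ * π) = J).card := ncard_subtype _

lemma NL_eq_sum (π : Equiv.Perm (Fin n)) (A B : Finset ℕ) :
    Nat.card {σ : Equiv.Perm (Fin n) // permDes σ ⊆ A ∧ permDes (σ⁻¹ * π) ⊆ B}
      = ∑ x ∈ A.powerset ×ˢ B.powerset, NE π x.1 x.2 := by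
  rw [ncard_subtype]
  rw [Finset.card_eq_sum_card_fiberwise
    (f := fun σ : Equiv.Perm (Fin n) => (permDes σ, permDes (σ⁻¹ * π)))
    (t := A.powerset ×ˢ B.powerset)
    (fun σ hσ => by
      simp only [Finset.coe_filter, Set.mem_setOf_eq] at hσ
      simp only [Finset.mem_coe, Finset.mem_product, Finset.mem_powerset]
      exact hσ.2)]
  refine Finset.sum_congr rfl fun x hx => ?_
  rw [Finset.mem_product, Finset.mem_powerset, Finset.mem_powerset] at hx
  rw [NE_eq_filter]
  congr 1
  ext σ
  simp only [Finset.mem_filter, Finset.mem_univ, true_and, Prod.ext_iff]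
  constructor
  · rintro ⟨_, h2, h3⟩; exact ⟨h2, h3⟩
  · rintro ⟨h2, h3⟩
    exact ⟨⟨h2 ▸ hx.1, h3 ▸ hx.2⟩, h2, h3⟩

lemma NE_congr {π π' : Equiv.Perm (Fin n)} (h : permDes π = permDes π') (I J : Finset ℕ) :
    NE π I J = NE π' I J := by
  suffices H : ∀ k : ℕ, ∀ I J : Finset ℕ, I.card + J.card ≤ k → NE π I J = NE π' I J from
    H (I.card + J.card) I J le_rfl
  intro k
  induction k using Nat.strong_induction_on with
  | _ k ih =>
    intro I J hk
    have hmem : (I, J) ∈ I.powerset ×ˢ J.powerset := by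
      simp [Finset.mem_product, Finset.mem_powerset]
    have h1 := NL_eq_sum π I J
    have h2 := NL_eq_sum π' I J
    rw [← Finset.add_sum_erase _ _ hmem] at h1 h2
    dsimp only at h1 h2
    have hNL := NL_congr h I J
    have hsum : ∑ x ∈ (I.powerset ×ˢ J.powerset).erase (I, J), NE π x.1 x.2
        = ∑ x ∈ (I.powerset ×ˢ J.powerset).erase (I, J), NE π' x.1 x.2 := by
      refine Finset.sum_congr rfl fun x hx => ?_
      rw [Finset.mem_erase, Finset.mem_product, Finset.mem_powerset, Finset.mem_powerset] at hx
      obtain ⟨hne, h1x, h2x⟩ := hx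
      have hcard : x.1.card + x.2.card < I.card + J.card := by
        have c1 := Finset.card_le_card h1x
        have c2 := Finset.card_le_card h2x
        rcases Nat.lt_or_ge (x.1.card + x.2.card) (I.card + J.card) with hlt | hge
        · exact hlt
        · exfalso
          have e1 : x.1 = I := Finset.eq_of_subset_of_card_le h1x (by omega)
          have e2 : x.2 = J := Finset.eq_of_subset_of_card_le h2x (by omega)
          exact hne (Prod.ext e1 e2)
      exact ih (x.1.card + x.2.card) (by omega) x.1 x.2 le_rfl
    omega

/-- factorizations `π = σ τ` correspond to `σ` alone. -/
def pairEquiv (ρ : Equiv.Perm (Fin n)) (I J : Finset ℕ) :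
    {st : Equiv.Perm (Fin n) × Equiv.Perm (Fin n) //
        st.1 * st.2 = ρ ∧ permDes st.1 = I ∧ permDes st.2 = J}
      ≃ {σ : Equiv.Perm (Fin n) // permDes σ = I ∧ permDes (σ⁻¹ * ρ) = J} where
  toFun st := ⟨st.1.1, st.2.2.1, by
    rw [show st.1.1⁻¹ * ρ = st.1.2 from inv_mul_eq_iff_eq_mul.mpr st.2.1.symm]
    exact st.2.2.2⟩
  invFun σ := ⟨(σ.1, σ.1⁻¹ * ρ), mul_inv_cancel_left σ.1 ρ, σ.2.1, σ.2.2⟩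
  left_inv st := Subtype.ext (Prod.ext rfl (inv_mul_eq_iff_eq_mul.mpr st.2.1.symm))
  right_inv σ := rfl

lemma card_pairs (ρ : Equiv.Perm (Fin n)) (I J : Finset ℕ) :
    Nat.card {st : Equiv.Perm (Fin n) × Equiv.Perm (Fin n) //
        st.1 * st.2 = ρ ∧ permDes st.1 = I ∧ permDes st.2 = J} = NE ρ I J :=
  Nat.card_congr (pairEquiv ρ I J)

end DescentAux


/-- The number of factorizations `π = σ τ` with `Des(σ) = I` and `Des(τ) = J`
depends only on the descent set of `π`. -/
theorem stmt2 (n : ℕ) (I J : Finset ℕ) (π π' : Equiv.Perm (Fin n))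
    (h : permDes π = permDes π') :
    Nat.card {st : Equiv.Perm (Fin n) × Equiv.Perm (Fin n) //
        st.1 * st.2 = π ∧ permDes st.1 = I ∧ permDes st.2 = J} =
    Nat.card {st : Equiv.Perm (Fin n) × Equiv.Perm (Fin n) //
        st.1 * st.2 = π' ∧ permDes st.1 = I ∧ permDes st.2 = J} := by
  rw [DescentAux.card_pairs π I J, DescentAux.card_pairs π' I J]
  exact DescentAux.NE_congr h I J
end
end

section
/- For compositions r and c of n, the number of matrices with non-negative integer entries whose row sums are r and column sums are c equals Σ_{λ ⊢ n} K_{λ,r} · K_{λ,c}, where K_{λ,μ} is the Kostka number. -/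
open scoped Classical

noncomputable section

/-- Number of entries of a semistandard Young tableau equal to `j`. -/
def ssytWeight {μ : YoungDiagram} (T : SemistandardYoungTableau μ) (j : ℕ) : ℕ :=
  (μ.cells.filter fun c => T c.1 c.2 = j).card

/-- The Kostka number `K_{λ,c}`: semistandard Young tableaux of shape `λ`
whose entry `j` appears `c_{j+1}` times. -/
def kostka (μ : YoungDiagram) {n : ℕ} (c : Composition n) : ℕ :=
  Nat.card {T : SemistandardYoungTableau μ // ∀ j, ssytWeight T j = c.blocks.getD j 0}

/-- The Young diagram of a partition of `n`. -/
def toYD {n : ℕ} (p : n.Partition) : YoungDiagram where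
  cells := (Finset.range n ×ˢ Finset.range n).filter fun c =>
    c.1 < (p.parts.filter fun a => c.2 < a).card
  isLowerSet := by
    intro x y hyx hx
    simp only [Finset.coe_filter, Set.mem_setOf_eq, Finset.mem_product,
      Finset.mem_range] at hx ⊢
    obtain ⟨⟨h1, h2⟩, h3⟩ := hx
    refine ⟨⟨lt_of_le_of_lt hyx.1 h1, lt_of_le_of_lt hyx.2 h2⟩,
      lt_of_le_of_lt hyx.1 (lt_of_lt_of_le h3 ?_)⟩
    exact Multiset.card_le_card
      (Multiset.monotone_filter_right _ fun a ha => lt_of_le_of_lt hyx.2 ha)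

/-- Interlacing of two weakly decreasing sequences: `b / a` is a horizontal strip. -/
def Itl (a b : ℕ → ℕ) : Prop := ∀ i, a i ≤ b i ∧ b (i + 1) ≤ a i

lemma itl_zero_zero : Itl (fun _ => 0) (fun _ => 0) := fun _ => ⟨le_rfl, le_rfl⟩

/-- Fomin's forward local rule for RSK growth diagrams. -/
def fwd (π ν κ : ℕ → ℕ) (t : ℕ) : ℕ → ℕ
  | 0 => max (ν 0) (κ 0) + t
  | (i + 1) => max (ν (i + 1)) (κ (i + 1)) + min (ν i) (κ i) - π i

lemma fwd_zero (π ν κ : ℕ → ℕ) (t : ℕ) : fwd π ν κ t 0 = max (ν 0) (κ 0) + t := rfl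

lemma fwd_succ (π ν κ : ℕ → ℕ) (t i : ℕ) :
    fwd π ν κ t (i + 1) = max (ν (i + 1)) (κ (i + 1)) + min (ν i) (κ i) - π i := rfl

/-- Backward local rule. -/
def bwd (ν κ lam : ℕ → ℕ) : ℕ → ℕ :=
  fun i => min (ν i) (κ i) + max (ν (i + 1)) (κ (i + 1)) - lam (i + 1)

/-- Matrix entry extracted by the backward rule. -/
def bt (ν κ lam : ℕ → ℕ) : ℕ := lam 0 - max (ν 0) (κ 0)

lemma fwd_itl_left {π ν κ : ℕ → ℕ} (hν : Itl π ν) (hκ : Itl π κ) (t : ℕ) :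
    Itl ν (fwd π ν κ t) := by
  intro i
  cases i with
  | zero =>
    have h1 := hν 0; have h2 := hκ 0
    rw [fwd_zero, fwd_succ]
    constructor <;> [skip; skip] <;>
      · simp only [Nat.max_def, Nat.min_def]; split_ifs <;> omega
  | succ i =>
    have h1 := hν i; have h2 := hκ i; have h3 := hν (i + 1); have h4 := hκ (i + 1)
    rw [fwd_succ, fwd_succ]
    constructor <;>
      · simp only [Nat.max_def, Nat.min_def]; split_ifs <;> omega

lemma fwd_itl_right {π ν κ : ℕ → ℕ} (hν : Itl π ν) (hκ : Itl π κ) (t : ℕ) :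
    Itl κ (fwd π ν κ t) := by
  intro i
  cases i with
  | zero =>
    have h1 := hν 0; have h2 := hκ 0
    rw [fwd_zero, fwd_succ]
    constructor <;>
      · simp only [Nat.max_def, Nat.min_def]; split_ifs <;> omega
  | succ i =>
    have h1 := hν i; have h2 := hκ i; have h3 := hν (i + 1); have h4 := hκ (i + 1)
    rw [fwd_succ, fwd_succ]
    constructor <;>
      · simp only [Nat.max_def, Nat.min_def]; split_ifs <;> omega

lemma bwd_itl_left {ν κ lam : ℕ → ℕ} (hν : Itl ν lam) (hκ : Itl κ lam) :
    Itl (bwd ν κ lam) ν := by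
  intro i
  have h1 := hν i; have h2 := hκ i; have h3 := hν (i + 1); have h4 := hκ (i + 1)
  constructor <;>
    · simp only [bwd, Nat.max_def, Nat.min_def]; split_ifs <;> omega

lemma bwd_itl_right {ν κ lam : ℕ → ℕ} (hν : Itl ν lam) (hκ : Itl κ lam) :
    Itl (bwd ν κ lam) κ := by
  intro i
  have h1 := hν i; have h2 := hκ i; have h3 := hν (i + 1); have h4 := hκ (i + 1)
  constructor <;>
    · simp only [bwd, Nat.max_def, Nat.min_def]; split_ifs <;> omega

lemma bwd_fwd {π ν κ : ℕ → ℕ} (hν : Itl π ν) (hκ : Itl π κ) (t : ℕ) :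
    bwd ν κ (fwd π ν κ t) = π := by
  funext i
  have h1 := hν i; have h2 := hκ i; have h3 := hν (i + 1); have h4 := hκ (i + 1)
  simp only [bwd, fwd_succ, Nat.max_def, Nat.min_def]
  split_ifs <;> omega

lemma bt_fwd {π ν κ : ℕ → ℕ} (hν : Itl π ν) (hκ : Itl π κ) (t : ℕ) :
    bt ν κ (fwd π ν κ t) = t := by
  have h1 := hν 0; have h2 := hκ 0
  simp only [bt, fwd_zero, Nat.max_def, Nat.min_def]
  split_ifs <;> omega

lemma fwd_bwd {ν κ lam : ℕ → ℕ} (hν : Itl ν lam) (hκ : Itl κ lam) :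
    fwd (bwd ν κ lam) ν κ (bt ν κ lam) = lam := by
  funext i
  cases i with
  | zero =>
    have h1 := hν 0; have h2 := hκ 0
    simp only [fwd_zero, bt, Nat.max_def, Nat.min_def]
    split_ifs <;> omega
  | succ i =>
    have h1 := hν i; have h2 := hκ i; have h3 := hν (i + 1); have h4 := hκ (i + 1)
    simp only [fwd_succ, bwd, Nat.max_def, Nat.min_def]
    split_ifs <;> omega

/-- Partial sum of a sequence. -/
def Ssum (N : ℕ) (f : ℕ → ℕ) : ℕ := ∑ x ∈ Finset.range N, f x

lemma Ssum_succ (N : ℕ) (f : ℕ → ℕ) : Ssum (N + 1) f = Ssum N f + f N :=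
  Finset.sum_range_succ f N

lemma Ssum_zero (f : ℕ → ℕ) : Ssum 0 f = 0 := rfl

lemma fwd_key {π ν κ : ℕ → ℕ} (hν : Itl π ν) (hκ : Itl π κ) (t : ℕ) : ∀ M,
    Ssum (M + 1) (fwd π ν κ t) + Ssum M π
      = t + Ssum (M + 1) (fun i => max (ν i) (κ i)) + Ssum M (fun i => min (ν i) (κ i)) := by
  intro M
  induction M with
  | zero =>
    simp only [Ssum_succ, Ssum_zero, fwd_zero]
    omega
  | succ M ihM =>
    have h1 := hν M; have h2 := hκ M
    have hstep : fwd π ν κ t (M + 1) + π M = max (ν (M + 1)) (κ (M + 1)) + min (ν M) (κ M) := by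
      rw [fwd_succ]
      simp only [Nat.max_def, Nat.min_def]; split_ifs <;> omega
    simp only [Ssum_succ] at ihM ⊢
    omega

lemma minmax_sum (ν κ : ℕ → ℕ) : ∀ M,
    Ssum M (fun i => max (ν i) (κ i)) + Ssum M (fun i => min (ν i) (κ i))
      = Ssum M ν + Ssum M κ := by
  intro M
  induction M with
  | zero => simp [Ssum_zero]
  | succ M ihM =>
    simp only [Ssum_succ] at ihM ⊢
    have : max (ν M) (κ M) + min (ν M) (κ M) = ν M + κ M := by
      simp only [Nat.max_def, Nat.min_def]; split_ifs <;> omega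
    omega

lemma fwd_sum {π ν κ : ℕ → ℕ} (hν : Itl π ν) (hκ : Itl π κ) (t N : ℕ)
    (hνN : ν N = 0) (hκN : κ N = 0) :
    Ssum (N + 1) (fwd π ν κ t) + Ssum (N + 1) π
      = Ssum (N + 1) ν + Ssum (N + 1) κ + t := by
  have k := fwd_key hν hκ t N
  have m := minmax_sum ν κ N
  have hπ : π N = 0 := by have := hν N; omega
  have hmax : (fun i => max (ν i) (κ i)) N = 0 := by simp [hνN, hκN]
  simp only [Ssum_succ, hπ, hνN, hκN, hmax] at k ⊢
  omega
/-- The RSK growth diagram of a matrix. -/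
def grow (M : ℕ → ℕ → ℕ) : ℕ → ℕ → ℕ → ℕ
  | 0, _ => fun _ => 0
  | _ + 1, 0 => fun _ => 0
  | i + 1, j + 1 => fwd (grow M i j) (grow M i (j + 1)) (grow M (i + 1) j) (M i j)
  termination_by i j => (i, j)
  decreasing_by
  · exact Prod.Lex.left _ _ (Nat.lt_succ_self i)
  · exact Prod.Lex.left _ _ (Nat.lt_succ_self i)
  · exact Prod.Lex.right _ (Nat.lt_succ_self j)

lemma grow_zero (M : ℕ → ℕ → ℕ) (j : ℕ) : grow M 0 j = fun _ => 0 := by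
  rw [grow]

lemma grow_zero' (M : ℕ → ℕ → ℕ) (i : ℕ) : grow M i 0 = fun _ => 0 := by
  cases i <;> rw [grow]

lemma grow_succ (M : ℕ → ℕ → ℕ) (i j : ℕ) :
    grow M (i + 1) (j + 1)
      = fwd (grow M i j) (grow M i (j + 1)) (grow M (i + 1) j) (M i j) := by
  rw [grow]

/-- Interlacing invariants of the growth diagram. -/
lemma grow_itl (M : ℕ → ℕ → ℕ) : ∀ i j : ℕ,
    Itl (grow M i j) (grow M i (j + 1)) ∧ Itl (grow M i j) (grow M (i + 1) j) := by
  have main : ∀ s i j, i + j = s →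
      Itl (grow M i j) (grow M i (j + 1)) ∧ Itl (grow M i j) (grow M (i + 1) j) := by
    intro s
    induction s using Nat.strong_induction_on with
    | _ s ih =>
      intro i j hs
      match i, j with
      | 0, 0 =>
        rw [grow_zero, grow_zero, grow_zero']
        exact ⟨itl_zero_zero, itl_zero_zero⟩
      | 0, j + 1 =>
        have h1 := (ih (0 + j) (by omega) 0 j rfl).1
        have h2 := (ih (0 + j) (by omega) 0 j rfl).2
        refine ⟨by rw [grow_zero, grow_zero]; exact itl_zero_zero, ?_⟩
        rw [grow_succ]
        exact fwd_itl_left h1 h2 _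
      | i + 1, 0 =>
        have h1 := (ih (i + 0) (by omega) i 0 rfl).1
        have h2 := (ih (i + 0) (by omega) i 0 rfl).2
        refine ⟨?_, by rw [grow_zero', grow_zero']; exact itl_zero_zero⟩
        rw [grow_succ]
        exact fwd_itl_right h1 h2 _
      | i + 1, j + 1 =>
        constructor
        · rw [grow_succ M i (j + 1)]
          have h1 := (ih (i + (j + 1)) (by omega) i (j + 1) rfl).1
          have h2 := (ih (i + (j + 1)) (by omega) i (j + 1) rfl).2
          exact fwd_itl_right h1 h2 _
        · rw [grow_succ M (i + 1) j]
          have h1 := (ih ((i + 1) + j) (by omega) (i + 1) j rfl).1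
          have h2 := (ih ((i + 1) + j) (by omega) (i + 1) j rfl).2
          exact fwd_itl_left h1 h2 _
  exact fun i j => main (i + j) i j rfl

lemma grow_supp_row (M : ℕ → ℕ → ℕ) : ∀ i j x, i ≤ x → grow M i j x = 0 := by
  intro i
  induction i with
  | zero => intro j x _; rw [grow_zero]
  | succ i ih =>
    intro j x hx
    obtain ⟨x, rfl⟩ : ∃ y, x = y + 1 := ⟨x - 1, by omega⟩
    have h := (grow_itl M i j).2 x
    have := ih j x (by omega)
    omega

lemma grow_supp_col (M : ℕ → ℕ → ℕ) : ∀ j i x, j ≤ x → grow M i j x = 0 := by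
  intro j
  induction j with
  | zero => intro i x _; rw [grow_zero']
  | succ j ih =>
    intro i x hx
    obtain ⟨x, rfl⟩ : ∃ y, x = y + 1 := ⟨x - 1, by omega⟩
    have h := (grow_itl M i j).1 x
    have := ih i x (by omega)
    omega

lemma grow_rowsum (M : ℕ → ℕ → ℕ) (N : ℕ) : ∀ i j, i + 1 < N →
    Ssum N (grow M (i + 1) j) = Ssum N (grow M i j) + ∑ j' ∈ Finset.range j, M i j' := by
  intro i j hiN
  induction j with
  | zero =>
    rw [grow_zero', grow_zero']
    simp
  | succ j ih =>
    obtain ⟨N', rfl⟩ : ∃ N', N = N' + 1 := ⟨N - 1, by omega⟩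
    have h1 := (grow_itl M i j).1
    have h2 := (grow_itl M i j).2
    have hsum := fwd_sum h1 h2 (M i j) N'
      (grow_supp_row M i (j + 1) N' (by omega)) (grow_supp_row M (i + 1) j N' (by omega))
    rw [grow_succ, Finset.sum_range_succ]
    omega

lemma grow_colsum (M : ℕ → ℕ → ℕ) (N : ℕ) : ∀ j i, j + 1 < N →
    Ssum N (grow M i (j + 1)) = Ssum N (grow M i j) + ∑ i' ∈ Finset.range i, M i' j := by
  intro j i hjN
  induction i with
  | zero =>
    rw [grow_zero, grow_zero]
    simp
  | succ i ih =>
    obtain ⟨N', rfl⟩ : ∃ N', N = N' + 1 := ⟨N - 1, by omega⟩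
    have h1 := (grow_itl M i j).1
    have h2 := (grow_itl M i j).2
    have hsum := fwd_sum h1 h2 (M i j) N'
      (grow_supp_col M (j + 1) i N' (by omega)) (grow_supp_col M j (i + 1) N' (by omega))
    rw [grow_succ, Finset.sum_range_succ]
    omega
/-- Inverse growth: reconstruct the growth diagram from its boundary chains.
`ung k l q p a b` is the partition at position `(k - a, l - b)`. -/
def ung (k l : ℕ) (q p : ℕ → ℕ → ℕ) : ℕ → ℕ → ℕ → ℕ
  | 0, b => p (l - b)
  | a + 1, 0 => q (k - (a + 1))
  | a + 1, b + 1 =>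
      bwd (ung k l q p (a + 1) b) (ung k l q p a (b + 1)) (ung k l q p a b)
  termination_by a b => (a, b)
  decreasing_by
    all_goals first
      | exact Prod.Lex.right _ (Nat.lt_succ_self _)
      | exact Prod.Lex.left _ _ (Nat.lt_succ_self _)

lemma ung_zero (k l : ℕ) (q p : ℕ → ℕ → ℕ) (b : ℕ) : ung k l q p 0 b = p (l - b) := by
  rw [ung]

lemma ung_zero' (k l : ℕ) (q p : ℕ → ℕ → ℕ) (a : ℕ) :
    ung k l q p (a + 1) 0 = q (k - (a + 1)) := by
  rw [ung]

lemma ung_succ (k l : ℕ) (q p : ℕ → ℕ → ℕ) (a b : ℕ) :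
    ung k l q p (a + 1) (b + 1)
      = bwd (ung k l q p (a + 1) b) (ung k l q p a (b + 1)) (ung k l q p a b) := by
  rw [ung]

section Ung

variable {k l : ℕ} {q p : ℕ → ℕ → ℕ}
  (hqc : ∀ i, i < k → Itl (q i) (q (i + 1)))
  (hpc : ∀ j, j < l → Itl (p j) (p (j + 1)))
  (hqp : q k = p l)

include hqc hpc hqp in
/-- Interlacing invariants of the inverse growth diagram. -/
lemma ung_itl : ∀ s a b, a + b = s → a ≤ k → b ≤ l →
    (∀ a', a = a' + 1 → Itl (ung k l q p (a' + 1) b) (ung k l q p a' b)) ∧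
    (∀ b', b = b' + 1 → Itl (ung k l q p a (b' + 1)) (ung k l q p a b')) := by
  intro s
  induction s using Nat.strong_induction_on with
  | _ s ih =>
    intro a b hs ha hb
    constructor
    · rintro a' rfl
      match b with
      | 0 =>
        rw [ung_zero']
        match a' with
        | 0 =>
          rw [ung_zero]
          have h := hqc (k - 1) (by omega)
          have e1 : k - 1 + 1 = k := by omega
          rw [e1, hqp] at h
          have e2 : l - 0 = l := by omega
          rw [e2]
          exact h
        | a'' + 1 =>
          rw [ung_zero']
          have h := hqc (k - (a'' + 2)) (by omega)
          have e1 : k - (a'' + 2) + 1 = k - (a'' + 1) := by omega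
          rw [e1] at h
          exact h
      | b'' + 1 =>
        rw [ung_succ]
        have h1 := (ih (a' + 1 + b'') (by omega) (a' + 1) b'' rfl (by omega) (by omega)).1
          a' rfl
        have h2 := (ih (a' + (b'' + 1)) (by omega) a' (b'' + 1) rfl (by omega) (by omega)).2
          b'' rfl
        exact bwd_itl_right h1 h2
    · rintro b' rfl
      match a with
      | 0 =>
        rw [ung_zero, ung_zero]
        have h := hpc (l - (b' + 1)) (by omega)
        have e1 : l - (b' + 1) + 1 = l - b' := by omega
        rw [e1] at h
        exact h
      | a'' + 1 =>
        rw [ung_succ]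
        have h1 := (ih (a'' + 1 + b') (by omega) (a'' + 1) b' rfl (by omega) (by omega)).1
          a'' rfl
        have h2 := (ih (a'' + (b' + 1)) (by omega) a'' (b' + 1) rfl (by omega) (by omega)).2
          b' rfl
        exact bwd_itl_left h1 h2
end Ung

/-- Round trip: ungrowing the boundary of a growth diagram gives back the diagram. -/
lemma ung_grow (M : ℕ → ℕ → ℕ) (k l : ℕ) : ∀ s a b, a + b = s → a ≤ k → b ≤ l →
    ung k l (fun i => grow M i l) (fun j => grow M k j) a b = grow M (k - a) (l - b) := by
  intro s
  induction s using Nat.strong_induction_on with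
  | _ s ih =>
    intro a b hs ha hb
    match a, b with
    | 0, b =>
      rw [ung_zero]
      have e : k - 0 = k := by omega
      rw [e]
    | a + 1, 0 =>
      rw [ung_zero']
      have e : l - 0 = l := by omega
      rw [e]
    | a + 1, b + 1 =>
      rw [ung_succ]
      rw [ih (a + 1 + b) (by omega) (a + 1) b rfl (by omega) (by omega)]
      rw [ih (a + (b + 1)) (by omega) a (b + 1) rfl (by omega) (by omega)]
      rw [ih (a + b) (by omega) a b rfl (by omega) (by omega)]
      obtain ⟨i, hi1, hi2⟩ : ∃ i, k - a = i + 1 ∧ k - (a + 1) = i := ⟨k - (a + 1), by omega⟩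
      obtain ⟨j, hj1, hj2⟩ : ∃ j, l - b = j + 1 ∧ l - (b + 1) = j := ⟨l - (b + 1), by omega⟩
      rw [hi1, hi2, hj1, hj2, grow_succ]
      exact bwd_fwd (grow_itl M i j).1 (grow_itl M i j).2 _

/-- Round trip for the matrix entries. -/
lemma bt_grow (M : ℕ → ℕ → ℕ) (i j : ℕ) :
    bt (grow M i (j + 1)) (grow M (i + 1) j) (grow M (i + 1) (j + 1)) = M i j := by
  rw [grow_succ]
  exact bt_fwd (grow_itl M i j).1 (grow_itl M i j).2 _

section Ung2

variable {k l : ℕ} {q p : ℕ → ℕ → ℕ}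
  (hqc : ∀ i, i < k → Itl (q i) (q (i + 1)))
  (hpc : ∀ j, j < l → Itl (p j) (p (j + 1)))
  (hqp : q k = p l)
  (hq0 : q 0 = fun _ => 0)
  (hp0 : p 0 = fun _ => 0)

include hqc hpc hqp hq0 in
lemma ung_left_zero : ∀ b, b ≤ l → ung k l q p k b = fun _ => 0 := by
  intro b
  induction b with
  | zero =>
    intro _
    match k with
    | 0 => rw [ung_zero, Nat.sub_zero, ← hqp]; exact hq0
    | k' + 1 => rw [ung_zero', Nat.sub_self]; exact hq0
  | succ b ihb =>
    intro hb
    have h := (ung_itl hqc hpc hqp (k + (b + 1)) k (b + 1) rfl le_rfl hb).2 b rfl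
    funext x
    have h1 := (h x).1
    have h2 : ung k l q p k b x = 0 := by rw [ihb (by omega)]
    show ung k l q p k (b + 1) x = 0
    omega

include hqc hpc hqp hp0 in
lemma ung_top_zero : ∀ a, a ≤ k → ung k l q p a l = fun _ => 0 := by
  intro a
  induction a with
  | zero => intro _; rw [ung_zero, Nat.sub_self]; exact hp0
  | succ a iha =>
    intro ha
    have h := (ung_itl hqc hpc hqp (a + 1 + l) (a + 1) l rfl ha le_rfl).1 a rfl
    funext x
    have h1 := (h x).1
    have h2 : ung k l q p a l x = 0 := by rw [iha (by omega)]
    show ung k l q p (a + 1) l x = 0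
    omega

include hqc hpc hqp hq0 hp0 in
/-- Round trip: growing the matrix extracted from an inverse growth diagram
gives back the diagram. -/
lemma grow_ung : ∀ s i j, i + j = s → i ≤ k → j ≤ l →
    grow (fun i j => bt (ung k l q p (k - i) (l - (j + 1))) (ung k l q p (k - (i + 1)) (l - j))
        (ung k l q p (k - (i + 1)) (l - (j + 1)))) i j
      = ung k l q p (k - i) (l - j) := by
  intro s
  induction s using Nat.strong_induction_on with
  | _ s ih =>
    intro i j hs hi hj
    match i, j with
    | 0, j =>
      rw [grow_zero, Nat.sub_zero]
      have : l - j + (l - (l - j)) = l := by omega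
      exact (ung_left_zero hqc hpc hqp hq0 (l - j) (by omega)).symm
    | i + 1, 0 =>
      rw [grow_zero', Nat.sub_zero]
      exact (ung_top_zero hqc hpc hqp hp0 (k - (i + 1)) (by omega)).symm
    | i + 1, j + 1 =>
      rw [grow_succ]
      rw [ih (i + j) (by omega) i j rfl (by omega) (by omega)]
      rw [ih (i + (j + 1)) (by omega) i (j + 1) rfl (by omega) (by omega)]
      rw [ih (i + 1 + j) (by omega) (i + 1) j rfl (by omega) (by omega)]
      obtain ⟨a, ha1, ha2⟩ : ∃ a, k - i = a + 1 ∧ k - (i + 1) = a := ⟨k - (i + 1), by omega⟩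
      obtain ⟨b, hb1, hb2⟩ : ∃ b, l - j = b + 1 ∧ l - (j + 1) = b := ⟨l - (j + 1), by omega⟩
      rw [ha1, ha2, hb1, hb2]
      rw [ung_succ]
      have h1 := (ung_itl hqc hpc hqp (a + 1 + b) (a + 1) b rfl (by omega) (by omega)).1 a rfl
      have h2 := (ung_itl hqc hpc hqp (a + (b + 1)) a (b + 1) rfl (by omega) (by omega)).2 b rfl
      exact fwd_bwd h1 h2

end Ung2
/-! ### Tableaux and chains -/

section Tab

variable {μ : YoungDiagram}

/-- The chain of partitions associated to a tableau: `cnt μ T i j` is the number of entries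
smaller than `i` in row `j`. -/
def cnt (μ : YoungDiagram) (T : SemistandardYoungTableau μ) (i : ℕ) : ℕ → ℕ :=
  fun j => ((Finset.range (μ.rowLen j)).filter fun x => T j x < i).card

lemma cnt_zero (T : SemistandardYoungTableau μ) : cnt μ T 0 = fun _ => 0 := by
  funext j
  show ((Finset.range (μ.rowLen j)).filter fun x => T j x < 0).card = 0
  rw [Finset.card_eq_zero]
  apply Finset.filter_false_of_mem
  intro x _
  omega

lemma cnt_mono (T : SemistandardYoungTableau μ) {i i' : ℕ} (h : i ≤ i') (j : ℕ) :
    cnt μ T i j ≤ cnt μ T i' j := by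
  apply Finset.card_le_card
  intro x hx
  simp only [Finset.mem_filter, Finset.mem_range] at hx ⊢
  omega

lemma cnt_le_rowLen (T : SemistandardYoungTableau μ) (i j : ℕ) :
    cnt μ T i j ≤ μ.rowLen j := by
  have := Finset.card_filter_le (Finset.range (μ.rowLen j)) (fun x => T j x < i)
  simpa [cnt] using this

lemma cnt_itl (T : SemistandardYoungTableau μ) (i : ℕ) : Itl (cnt μ T i) (cnt μ T (i + 1)) := by
  intro j
  constructor
  · exact cnt_mono T (Nat.le_succ i) j
  · apply Finset.card_le_card
    intro x hx
    simp only [Finset.mem_filter, Finset.mem_range] at hx ⊢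
    obtain ⟨hx1, hx2⟩ := hx
    have hcell : (j + 1, x) ∈ μ := YoungDiagram.mem_iff_lt_rowLen.2 hx1
    have hcs := T.col_strict (show j < j + 1 by omega) hcell
    have hcell' : (j, x) ∈ μ := μ.up_left_mem (by omega) le_rfl hcell
    exact ⟨YoungDiagram.mem_iff_lt_rowLen.1 hcell', by omega⟩

lemma cnt_top (T : SemistandardYoungTableau μ) (k : ℕ)
    (hk : ∀ j x, (j, x) ∈ μ → T j x < k) (j : ℕ) : cnt μ T k j = μ.rowLen j := by
  rw [cnt]
  have : ∀ x ∈ Finset.range (μ.rowLen j), T j x < k := by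
    intro x hx
    exact hk j x (YoungDiagram.mem_iff_lt_rowLen.2 (Finset.mem_range.1 hx))
  rw [Finset.filter_true_of_mem this, Finset.card_range]

lemma cnt_clamp (T : SemistandardYoungTableau μ) (k : ℕ)
    (hk : ∀ j x, (j, x) ∈ μ → T j x < k) (i : ℕ) (hi : k ≤ i) :
    cnt μ T i = cnt μ T k := by
  funext j
  rw [cnt, cnt]
  congr 1
  apply Finset.filter_congr
  intro x hx
  have := hk j x (YoungDiagram.mem_iff_lt_rowLen.2 (Finset.mem_range.1 hx))
  omega

/-- Entries of a tableau with bounded weight are bounded. -/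
lemma entry_lt (T : SemistandardYoungTableau μ) (k : ℕ) (w : ℕ → ℕ)
    (hw : ∀ v, ssytWeight T v = w v) (hwk : ∀ v, k ≤ v → w v = 0) :
    ∀ j x, (j, x) ∈ μ → T j x < k := by
  intro j x hcell
  by_contra hTk
  have h0 : ssytWeight T (T j x) = 0 := by rw [hw]; exact hwk _ (by omega)
  rw [ssytWeight, Finset.card_eq_zero] at h0
  have : (j, x) ∈ μ.cells.filter fun c => T c.1 c.2 = T j x := by
    simp [YoungDiagram.mem_cells, hcell]
  rw [h0] at this
  exact absurd this (Finset.notMem_empty _)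

/-- Splitting the weight count along rows. -/
lemma ssytWeight_eq_sum (T : SemistandardYoungTableau μ) (N : ℕ)
    (hN : ∀ j, N ≤ j → μ.rowLen j = 0) (v : ℕ) :
    ssytWeight T v
      = ∑ j ∈ Finset.range N, ((Finset.range (μ.rowLen j)).filter fun x => T j x = v).card := by
  rw [ssytWeight]
  rw [show (μ.cells.filter fun c => T c.1 c.2 = v)
      = (Finset.range N).biUnion (fun j => (μ.row j).filter fun c => T c.1 c.2 = v) from ?_]
  · rw [Finset.card_biUnion]
    · apply Finset.sum_congr rfl
      intro j _
      rw [YoungDiagram.row_eq_prod, Finset.singleton_product, Finset.filter_map,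
        Finset.card_map]
      congr 1
    · intro a _ b _ hab
      simp only [Finset.disjoint_left, Finset.mem_filter, YoungDiagram.mem_row_iff]
      rintro ⟨x1, x2⟩ ⟨⟨_, h1⟩, _⟩ ⟨⟨_, h2⟩, _⟩
      exact hab (h1 ▸ h2 ▸ rfl)
  · ext ⟨j, x⟩
    simp only [Finset.mem_filter, YoungDiagram.mem_cells, Finset.mem_biUnion,
      Finset.mem_range, YoungDiagram.mem_row_iff]
    constructor
    · rintro ⟨hmem, hv⟩
      refine ⟨j, ?_, ⟨⟨hmem, rfl⟩, hv⟩⟩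
      by_contra hj
      have h1 := hN j (by omega)
      have h2 := YoungDiagram.mem_iff_lt_rowLen.1 hmem
      omega
    · rintro ⟨j', _, ⟨⟨hmem, rfl⟩, hv⟩⟩
      exact ⟨hmem, hv⟩

lemma cnt_step (T : SemistandardYoungTableau μ) (i j : ℕ) :
    cnt μ T (i + 1) j
      = cnt μ T i j + ((Finset.range (μ.rowLen j)).filter fun x => T j x = i).card := by
  have hsplit : ((Finset.range (μ.rowLen j)).filter fun x => T j x < i + 1)
      = ((Finset.range (μ.rowLen j)).filter fun x => T j x < i)
        ∪ ((Finset.range (μ.rowLen j)).filter fun x => T j x = i) := by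
    ext x
    simp only [Finset.mem_filter, Finset.mem_union, Finset.mem_range]
    omega
  have hdisj : Disjoint ((Finset.range (μ.rowLen j)).filter fun x => T j x < i)
      ((Finset.range (μ.rowLen j)).filter fun x => T j x = i) := by
    rw [Finset.disjoint_left]
    intro x hx hx'
    simp only [Finset.mem_filter] at hx hx'
    omega
  rw [cnt, cnt, hsplit, Finset.card_union_of_disjoint hdisj]

lemma cnt_sum_step (T : SemistandardYoungTableau μ) (N : ℕ)
    (hN : ∀ j, N ≤ j → μ.rowLen j = 0) (i : ℕ) :
    Ssum N (cnt μ T (i + 1)) = Ssum N (cnt μ T i) + ssytWeight T i := by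
  rw [ssytWeight_eq_sum T N hN i, Ssum, Ssum, ← Finset.sum_add_distrib]
  apply Finset.sum_congr rfl
  intro j _
  exact cnt_step T i j

end Tab
/-! ### Chains to tableaux -/

lemma range_of_dc (S : Finset ℕ) (k : ℕ) (hS : S ⊆ Finset.range k)
    (hdc : ∀ i i', i' ≤ i → i ∈ S → i' ∈ S) : S = Finset.range S.card := by
  have sub1 : Finset.range S.card ⊆ S := by
    intro i hi
    rw [Finset.mem_range] at hi
    by_contra hiS
    have hsub : S ⊆ Finset.range i := by
      intro s hs
      rw [Finset.mem_range]
      by_contra hsi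
      exact hiS (hdc s i (by omega) hs)
    have := Finset.card_le_card hsub
    rw [Finset.card_range] at this
    omega
  exact (Finset.eq_of_subset_of_card_le sub1 (by rw [Finset.card_range])).symm

/-- Level function: the entry of the tableau associated to a chain. -/
def lvl (k : ℕ) (q : ℕ → ℕ → ℕ) (j x : ℕ) : ℕ :=
  ((Finset.range k).filter fun i => q (i + 1) j ≤ x).card

section Chain

variable {k : ℕ} {q : ℕ → ℕ → ℕ}

section Basic

variable (hq0 : q 0 = fun _ => 0) (hchain : ∀ i, i < k → Itl (q i) (q (i + 1)))

include hchain in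
lemma q_mono {i i' : ℕ} (h : i ≤ i') (h' : i' ≤ k) (j : ℕ) : q i j ≤ q i' j := by
  obtain ⟨d, rfl⟩ : ∃ d, i' = i + d := ⟨i' - i, by omega⟩
  clear h
  induction d with
  | zero => exact le_rfl
  | succ d ihd =>
    have h1 := ((hchain (i + d) (by omega)) j).1
    have := ihd (by omega)
    show q i j ≤ q (i + d + 1) j
    omega

include hq0 hchain in
lemma q_anti {a : ℕ} (ha : a ≤ k) {x x' : ℕ} (h : x ≤ x') (j : True) : q a x' ≤ q a x := by
  clear j
  obtain ⟨d, rfl⟩ : ∃ d, x' = x + d := ⟨x' - x, by omega⟩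
  induction d with
  | zero => exact le_rfl
  | succ d ihd =>
    have step : q a (x + d + 1) ≤ q a (x + d) := by
      match a, ha with
      | 0, _ => rw [hq0]
      | a + 1, ha =>
        have h1 := (hchain a (by omega)) (x + d)
        omega
    show q a (x + d + 1) ≤ q a x
    omega

include hq0 hchain in
lemma q_supp : ∀ i, i ≤ k → ∀ x, i ≤ x → q i x = 0 := by
  intro i
  induction i with
  | zero => intro _ x _; rw [hq0]
  | succ i ihi =>
    intro hi x hx
    obtain ⟨x, rfl⟩ : ∃ y, x = y + 1 := ⟨x - 1, by omega⟩
    have h1 := ((hchain i (by omega)) x).2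
    have := ihi (by omega) x (by omega)
    omega

include hq0 hchain in
/-- The band characterization of the level function. -/
lemma lvl_band {j x : ℕ} (hx : x < q k j) :
    q (lvl k q j x) j ≤ x ∧ x < q (lvl k q j x + 1) j ∧ lvl k q j x < k := by
  set S := (Finset.range k).filter fun i => q (i + 1) j ≤ x with hS
  have hdc : ∀ i i', i' ≤ i → i ∈ S → i' ∈ S := by
    intro i i' hii hiS
    simp only [hS, Finset.mem_filter, Finset.mem_range] at hiS ⊢
    have := q_mono hchain (show i' + 1 ≤ i + 1 by omega) (by omega) j
    exact ⟨by omega, by omega⟩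
  have hrange := range_of_dc S k (Finset.filter_subset _ _) hdc
  have hcard : lvl k q j x = S.card := rfl
  have hklt : lvl k q j x < k := by
    rcases Nat.lt_or_ge (lvl k q j x) k with h | h
    · exact h
    have hklek : S.card ≤ k := by
      have := Finset.card_le_card (Finset.filter_subset (fun i => q (i + 1) j ≤ x)
        (Finset.range k))
      simpa using this
    have hkk : S.card = k := by omega
    -- then k - 1 ∈ S, so q k j ≤ x, contradiction
    have hk0 : 0 < k := by
      by_contra h0
      have : k = 0 := by omega
      rw [this] at hx
      have : q 0 j = 0 := by rw [hq0]
      omega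
    have : k - 1 ∈ S := by
      rw [hrange, hkk]
      exact Finset.mem_range.2 (by omega)
    simp only [hS, Finset.mem_filter] at this
    have : q (k - 1 + 1) j ≤ x := this.2
    rw [show k - 1 + 1 = k by omega] at this
    omega
  refine ⟨?_, ?_, hklt⟩
  · match h : lvl k q j x with
    | 0 =>
      rw [hq0]
      exact Nat.zero_le x
    | a + 1 =>
      have : a ∈ S := by
        rw [hrange, ← hcard, h]
        exact Finset.mem_range.2 (by omega)
      simp only [hS, Finset.mem_filter] at this
      exact this.2
  · have : lvl k q j x ∉ S := by
      rw [hrange, ← hcard]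
      simp
    simp only [hS, Finset.mem_filter, Finset.mem_range] at this
    push_neg at this
    exact this (by omega)

end Basic

/-- The tableau entries associated to a chain. -/
def tabf (μ : YoungDiagram) (k : ℕ) (q : ℕ → ℕ → ℕ) : ℕ → ℕ → ℕ :=
  fun j x => if x < μ.rowLen j then lvl k q j x else 0

/-- The semistandard Young tableau associated to a chain of interlacing partitions. -/
def tabOf (μ : YoungDiagram) (k : ℕ) (q : ℕ → ℕ → ℕ) (hq0 : q 0 = fun _ => 0)
    (hchain : ∀ i, i < k → Itl (q i) (q (i + 1))) (htop : ∀ j, q k j = μ.rowLen j) :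
    SemistandardYoungTableau μ where
  entry := tabf μ k q
  row_weak' := by
    intro row x1 x2 hx hcell
    have h2 : x2 < μ.rowLen row := YoungDiagram.mem_iff_lt_rowLen.1 hcell
    have h1 : x1 < μ.rowLen row := by omega
    rw [tabf, tabf, if_pos h1, if_pos h2]
    apply Finset.card_le_card
    intro i hi
    simp only [Finset.mem_filter, Finset.mem_range] at hi ⊢
    omega
  col_strict' := by
    intro r1 r2 x hr hcell
    have h2 : x < μ.rowLen r2 := YoungDiagram.mem_iff_lt_rowLen.1 hcell
    have h1 : x < μ.rowLen r1 := by
      have := μ.rowLen_anti r1 r2 (by omega)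
      omega
    rw [tabf, tabf, if_pos h1, if_pos h2]
    have hb2 := lvl_band hq0 hchain (j := r2) (x := x) (by rw [htop]; omega)
    have hb1 := lvl_band hq0 hchain (j := r1) (x := x) (by rw [htop]; omega)
    set a := lvl k q r2 x
    set b := lvl k q r1 x
    -- x < q (a+1) r2 ≤ q a (r2 - 1) ≤ q a r1
    have hstep : q (a + 1) r2 ≤ q a (r2 - 1) := by
      have := ((hchain a hb2.2.2) (r2 - 1)).2
      rw [show r2 - 1 + 1 = r2 by omega] at this
      exact this
    have hanti : q a (r2 - 1) ≤ q a r1 :=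
      q_anti hq0 hchain (by omega) (show r1 ≤ r2 - 1 by omega) trivial
    -- so x < q a r1 hence b < a
    by_contra hab
    have hba : a ≤ b := by omega
    have := q_mono hchain hba (by omega) r1
    omega
  zeros' := by
    intro row x hcell
    rw [tabf, if_neg]
    rw [YoungDiagram.mem_iff_lt_rowLen] at hcell
    omega

lemma filter_lt_card {R m : ℕ} (h : m ≤ R) :
    ((Finset.range R).filter fun x => x < m).card = m := by
  rw [show (Finset.range R).filter (fun x => x < m) = Finset.range m by
    ext x; simp only [Finset.mem_filter, Finset.mem_range]; omega]
  exact Finset.card_range m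

variable (hq0 : q 0 = fun _ => 0) (hchain : ∀ i, i < k → Itl (q i) (q (i + 1)))

include hq0 hchain in
lemma tabOf_entry_lt {μ : YoungDiagram} (htop : ∀ j, q k j = μ.rowLen j) :
    ∀ j x, (j, x) ∈ μ → (tabOf μ k q hq0 hchain htop) j x < k := by
  intro j x hcell
  have hx : x < μ.rowLen j := YoungDiagram.mem_iff_lt_rowLen.1 hcell
  show tabf μ k q j x < k
  rw [tabf, if_pos hx]
  exact (lvl_band hq0 hchain (by rw [htop]; omega)).2.2

include hq0 hchain in
/-- Round trip: the chain of the tableau of a chain. -/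
lemma cnt_tabOf {μ : YoungDiagram} (htop : ∀ j, q k j = μ.rowLen j)
    (hcl : ∀ i, k ≤ i → q i = q k) :
    ∀ i, cnt μ (tabOf μ k q hq0 hchain htop) i = q i := by
  have main : ∀ i, i ≤ k → cnt μ (tabOf μ k q hq0 hchain htop) i = q i := by
    intro i hik
    funext j
    rw [cnt]
    have hfe : (Finset.range (μ.rowLen j)).filter
          (fun x => (tabOf μ k q hq0 hchain htop) j x < i)
        = (Finset.range (μ.rowLen j)).filter fun x => x < q i j := by
      apply Finset.filter_congr
      intro x hx
      rw [Finset.mem_range] at hx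
      have hentry : (tabOf μ k q hq0 hchain htop) j x = lvl k q j x := by
        show tabf μ k q j x = _
        rw [tabf, if_pos hx]
      rw [hentry]
      have hband := lvl_band hq0 hchain (j := j) (x := x) (by rw [htop]; omega)
      constructor
      · intro hlt
        calc x < q (lvl k q j x + 1) j := hband.2.1
          _ ≤ q i j := q_mono hchain (by omega) hik j
      · intro hlt
        by_contra hge
        have : q i j ≤ q (lvl k q j x) j := q_mono hchain (by omega) (by omega) j
        omega
    rw [hfe, filter_lt_card]
    rw [← htop j]
    exact q_mono hchain hik le_rfl j
  intro i
  rcases Nat.lt_or_ge i k with h | h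
  · exact main i (by omega)
  · rw [cnt_clamp _ k (tabOf_entry_lt hq0 hchain htop) i h, hcl i h, main k le_rfl]

include hq0 hchain in
lemma tabOf_weight {μ : YoungDiagram} (htop : ∀ j, q k j = μ.rowLen j)
    (hcl : ∀ i, k ≤ i → q i = q k) (N : ℕ) (hN : ∀ j, N ≤ j → μ.rowLen j = 0)
    (w : ℕ → ℕ) (hstep : ∀ i, Ssum N (q (i + 1)) = Ssum N (q i) + w i) :
    ∀ v, ssytWeight (tabOf μ k q hq0 hchain htop) v = w v := by
  intro v
  have h1 := cnt_sum_step (tabOf μ k q hq0 hchain htop) N hN v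
  rw [cnt_tabOf hq0 hchain htop hcl, cnt_tabOf hq0 hchain htop hcl] at h1
  have h2 := hstep v
  omega

/-- Round trip: the tableau of the chain of a tableau. -/
lemma tabOf_cnt {μ : YoungDiagram} (T : SemistandardYoungTableau μ)
    (hk : ∀ j x, (j, x) ∈ μ → T j x < k) (htop : ∀ j, cnt μ T k j = μ.rowLen j) :
    tabOf μ k (cnt μ T) (cnt_zero T) (fun i _ => cnt_itl T i) htop = T := by
  ext row x
  show tabf μ k (cnt μ T) row x = T row x
  rcases Nat.lt_or_ge x (μ.rowLen row) with hx | hx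
  · rw [tabf, if_pos hx]
    have hcell : (row, x) ∈ μ := YoungDiagram.mem_iff_lt_rowLen.2 hx
    have hband := lvl_band (q := cnt μ T) (cnt_zero T) (fun i _ => cnt_itl T i)
      (j := row) (x := x) (by rw [htop]; omega)
    -- direct band for T row x
    have hTk : T row x < k := hk row x hcell
    have d1 : cnt μ T (T row x) row ≤ x := by
      have hsub : ((Finset.range (μ.rowLen row)).filter fun x' => T row x' < T row x)
          ⊆ Finset.range x := by
        intro x' hx'
        simp only [Finset.mem_filter, Finset.mem_range] at hx' ⊢
        by_contra hge
        have : (row, x') ∈ μ := YoungDiagram.mem_iff_lt_rowLen.2 hx'.1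
        have := T.row_weak_of_le (show x ≤ x' by omega) this
        omega
      have := Finset.card_le_card hsub
      rw [Finset.card_range] at this
      exact this
    have d2 : x < cnt μ T (T row x + 1) row := by
      have hsub : Finset.range (x + 1)
          ⊆ (Finset.range (μ.rowLen row)).filter fun x' => T row x' < T row x + 1 := by
        intro x' hx'
        simp only [Finset.mem_filter, Finset.mem_range] at hx' ⊢
        have := T.row_weak_of_le (show x' ≤ x by omega) hcell
        omega
      have := Finset.card_le_card hsub
      rw [Finset.card_range] at this
      show x < cnt μ T (T row x + 1) row
      rw [cnt]
      omega
    -- uniqueness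
    set a := lvl k (cnt μ T) row x with ha
    rcases Nat.lt_trichotomy a (T row x) with h | h | h
    · exfalso
      have : cnt μ T (a + 1) row ≤ cnt μ T (T row x) row := cnt_mono T (by omega) row
      have hb := hband.2.1
      omega
    · exact h
    · exfalso
      have : cnt μ T (T row x + 1) row ≤ cnt μ T a row := cnt_mono T (by omega) row
      have hb := hband.1
      omega
  · rw [tabf, if_neg (by omega)]
    exact (T.zeros (by rw [YoungDiagram.mem_iff_lt_rowLen]; omega)).symm

end Chain
/-! ### Partitions from antitone functions -/

lemma mcard_le_sum (m : Multiset ℕ) (h : ∀ x ∈ m, 0 < x) : Multiset.card m ≤ m.sum := by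
  induction m using Multiset.induction_on with
  | empty => simp
  | cons a s ih =>
    simp only [Multiset.card_cons, Multiset.sum_cons]
    have ha := h a (Multiset.mem_cons_self a s)
    have := ih (fun x hx => h x (Multiset.mem_cons_of_mem hx))
    omega

/-- The multiset of positive values of `f` on `[0, n)`. -/
def pOfM (n : ℕ) (f : ℕ → ℕ) : Multiset ℕ := ((Multiset.range n).map f).filter (0 < ·)

lemma pOfM_sum (n : ℕ) (f : ℕ → ℕ) : (pOfM n f).sum = Ssum n f := by
  rw [pOfM]
  have hzero : (((Multiset.range n).map f).filter fun a => ¬0 < a).sum = 0 := by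
    rw [Multiset.sum_eq_zero_iff]
    intro x hx
    have := Multiset.of_mem_filter hx
    omega
  have hsplit := congrArg Multiset.sum
    (Multiset.filter_add_not (fun a => 0 < a) ((Multiset.range n).map f))
  rw [Multiset.sum_add, hzero, add_zero] at hsplit
  rw [hsplit]
  rfl

/-- The partition associated to an antitone function with sum `n`. -/
def pOf (n : ℕ) (f : ℕ → ℕ) (h : Ssum n f = n) : n.Partition where
  parts := pOfM n f
  parts_pos := fun hx => Multiset.of_mem_filter hx
  parts_sum := by rw [pOfM_sum, h]

lemma pOfM_countP (n : ℕ) (f : ℕ → ℕ) (v : ℕ) :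
    Multiset.countP (fun a => v < a) (pOfM n f)
      = ((Finset.range n).filter fun j => v < f j).card := by
  rw [pOfM, Multiset.countP_filter, Multiset.countP_map]
  have hc : (Multiset.filter (fun a => v < f a ∧ 0 < f a) (Multiset.range n))
      = (Multiset.filter (fun j => v < f j) (Multiset.range n)) := by
    apply Multiset.filter_congr
    intro x _
    constructor
    · exact fun h => h.1
    · exact fun h => ⟨h, by omega⟩
  rw [hc]
  rfl

/-- Antitone functions are determined by their upper counts. -/
lemma cf_char {n : ℕ} {f : ℕ → ℕ} (hanti : ∀ i, f (i + 1) ≤ f i)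
    (hsupp : ∀ i, n ≤ i → f i = 0) (i v : ℕ) :
    v < f i ↔ i < ((Finset.range n).filter fun j => v < f j).card := by
  have anti_le : ∀ d j, f (j + d) ≤ f j := by
    intro d
    induction d with
    | zero => intro j; exact le_rfl
    | succ d ihd =>
      intro j
      have h1 := hanti (j + d)
      have := ihd j
      show f (j + d + 1) ≤ f j
      omega
  constructor
  · intro h
    have hin : i < n := by
      by_contra hge
      rw [hsupp i (by omega)] at h
      omega
    have hsub : Finset.range (i + 1) ⊆ (Finset.range n).filter fun j => v < f j := by
      intro j hj
      rw [Finset.mem_range] at hj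
      simp only [Finset.mem_filter, Finset.mem_range]
      have := anti_le (i - j) j
      rw [show j + (i - j) = i by omega] at this
      exact ⟨by omega, by omega⟩
    have := Finset.card_le_card hsub
    rw [Finset.card_range] at this
    omega
  · intro h
    by_contra hge
    have hsub : ((Finset.range n).filter fun j => v < f j) ⊆ Finset.range i := by
      intro j hj
      simp only [Finset.mem_filter, Finset.mem_range] at hj
      rw [Finset.mem_range]
      by_contra hji
      have := anti_le (j - i) i
      rw [show i + (j - i) = j by omega] at this
      omega
    have := Finset.card_le_card hsub
    rw [Finset.card_range] at this
    omega

lemma anti_eq_of_counts {n : ℕ} {f g : ℕ → ℕ} (hf : ∀ i, f (i + 1) ≤ f i)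
    (hg : ∀ i, g (i + 1) ≤ g i) (hfs : ∀ i, n ≤ i → f i = 0) (hgs : ∀ i, n ≤ i → g i = 0)
    (h : ∀ v, ((Finset.range n).filter fun j => v < f j).card
      = ((Finset.range n).filter fun j => v < g j).card) : f = g := by
  funext i
  by_contra hne
  rcases Nat.lt_or_ge (f i) (g i) with hlt | hge
  · have h1 := (cf_char hg hgs i (f i)).1 hlt
    rw [← h] at h1
    have h2 := (cf_char hf hfs i (f i)).2 h1
    omega
  · have hlt : g i < f i := by omega
    have h1 := (cf_char hf hfs i (g i)).1 hlt
    rw [h] at h1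
    have h2 := (cf_char hg hgs i (g i)).2 h1
    omega
/-! ### Properties of `toYD` -/

section ToYD

variable {n : ℕ} (p : n.Partition)

lemma toYD_mem (c : ℕ × ℕ) :
    c ∈ toYD p ↔ c.1 < n ∧ c.2 < n ∧ c.1 < Multiset.countP (fun a => c.2 < a) p.parts := by
  show c ∈ (toYD p).cells ↔ _
  rw [toYD]
  simp only [Finset.mem_filter, Finset.mem_product, Finset.mem_range]
  rw [Multiset.countP_eq_card_filter]
  tauto

lemma toYD_rowLen_le (i : ℕ) : (toYD p).rowLen i ≤ n := by
  by_contra h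
  have : (i, n) ∈ toYD p := YoungDiagram.mem_iff_lt_rowLen.2 (by omega)
  rw [toYD_mem] at this
  omega

lemma toYD_rowLen_zero (i : ℕ) (hi : n ≤ i) : (toYD p).rowLen i = 0 := by
  by_contra h
  have : (i, 0) ∈ toYD p := YoungDiagram.mem_iff_lt_rowLen.2 (by omega)
  rw [toYD_mem] at this
  omega

lemma parts_le_n {a : ℕ} (ha : a ∈ p.parts) : a ≤ n := by
  have := Multiset.single_le_sum (fun x _ => Nat.zero_le x) a ha
  rw [p.parts_sum] at this
  exact this

lemma parts_card_le : Multiset.card p.parts ≤ n := by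
  have := mcard_le_sum p.parts (fun x hx => p.parts_pos hx)
  rw [p.parts_sum] at this
  exact this

lemma countP_le_card {α : Type*} (P : α → Prop) [DecidablePred P] (m : Multiset α) :
    Multiset.countP P m ≤ Multiset.card m := by
  rw [Multiset.countP_eq_card_filter]
  exact Multiset.card_le_card (Multiset.filter_le _ _)

lemma toYD_count (v : ℕ) :
    Multiset.countP (fun a => v < a) p.parts
      = ((Finset.range n).filter fun i => v < (toYD p).rowLen i).card := by
  rcases Nat.lt_or_ge v n with hv | hv
  · have hcong : (Finset.range n).filter (fun i => v < (toYD p).rowLen i)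
        = (Finset.range n).filter fun i => i < Multiset.countP (fun a => v < a) p.parts := by
      apply Finset.filter_congr
      intro i hi
      rw [Finset.mem_range] at hi
      rw [← YoungDiagram.mem_iff_lt_rowLen, toYD_mem]
      constructor
      · exact fun h => h.2.2
      · exact fun h => ⟨hi, hv, h⟩
    rw [hcong, filter_lt_card]
    calc Multiset.countP (fun a => v < a) p.parts ≤ Multiset.card p.parts :=
        countP_le_card _ _
      _ ≤ n := parts_card_le p
  · have h1 : Multiset.countP (fun a => v < a) p.parts = 0 := by
      rw [Multiset.countP_eq_zero]
      intro a ha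
      have := parts_le_n p ha
      omega
    have h2 : (Finset.range n).filter (fun i => v < (toYD p).rowLen i) = ∅ := by
      apply Finset.filter_false_of_mem
      intro i _
      have := toYD_rowLen_le p i
      omega
    rw [h1, h2, Finset.card_empty]

end ToYD

/-- Positive multisets with equal upper counts are equal. -/
lemma multiset_eq_of_countP (m₁ m₂ : Multiset ℕ) (h1 : ∀ x ∈ m₁, 0 < x)
    (h2 : ∀ x ∈ m₂, 0 < x)
    (h : ∀ v, Multiset.countP (fun a => v < a) m₁ = Multiset.countP (fun a => v < a) m₂) :
    m₁ = m₂ := by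
  have key : ∀ (m : Multiset ℕ) (v : ℕ),
      Multiset.countP (fun a => v < a) m
        = Multiset.countP (fun a => v + 1 < a) m + Multiset.count (v + 1) m := by
    intro m v
    have hsplit := congrArg Multiset.card
      (Multiset.filter_add_filter (fun a => v + 1 < a) (fun a => v + 1 = a) m)
    rw [Multiset.card_add, Multiset.card_add] at hsplit
    rw [← Multiset.countP_eq_card_filter, ← Multiset.countP_eq_card_filter,
      ← Multiset.countP_eq_card_filter, ← Multiset.countP_eq_card_filter] at hsplit
    have e1 : Multiset.countP (fun a => v + 1 < a ∨ v + 1 = a) m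
        = Multiset.countP (fun a => v < a) m := by
      apply Multiset.countP_congr rfl
      intro x _
      simp only [eq_iff_iff]
      omega
    have e2 : Multiset.countP (fun a => v + 1 < a ∧ v + 1 = a) m = 0 := by
      rw [Multiset.countP_eq_zero]
      intro a _
      omega
    rw [e1, e2] at hsplit
    rw [Multiset.count]
    have e3 : Multiset.countP (fun a => v + 1 = a) m = Multiset.countP (v + 1 = ·) m := rfl
    omega
  ext a
  match a with
  | 0 =>
    rw [Multiset.count_eq_zero.2 (fun hmem => by have := h1 0 hmem; omega),
      Multiset.count_eq_zero.2 (fun hmem => by have := h2 0 hmem; omega)]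
  | v + 1 =>
    have k1 := key m₁ v
    have k2 := key m₂ v
    have hv := h v
    have hv1 := h (v + 1)
    omega

/-- The bridge: `pOf f = p` iff `f` is the row-length function of `toYD p`. -/
lemma pOf_eq_iff {n : ℕ} (p : n.Partition) (f : ℕ → ℕ) (hanti : ∀ i, f (i + 1) ≤ f i)
    (hsupp : ∀ i, n ≤ i → f i = 0) (hsum : Ssum n f = n) :
    pOf n f hsum = p ↔ ∀ x, f x = (toYD p).rowLen x := by
  have hranti : ∀ i, (toYD p).rowLen (i + 1) ≤ (toYD p).rowLen i :=
    fun i => (toYD p).rowLen_anti i (i + 1) (by omega)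
  have hrsupp : ∀ i, n ≤ i → (toYD p).rowLen i = 0 := fun i hi => toYD_rowLen_zero p i hi
  constructor
  · intro h
    have hparts : pOfM n f = p.parts := congrArg Nat.Partition.parts h
    have hcnt : ∀ v, ((Finset.range n).filter fun j => v < f j).card
        = ((Finset.range n).filter fun i => v < (toYD p).rowLen i).card := by
      intro v
      rw [← pOfM_countP, hparts, toYD_count]
    have := anti_eq_of_counts hanti hranti hsupp hrsupp hcnt
    exact fun x => congrFun this x
  · intro h
    have hparts : pOfM n f = p.parts := by
      apply multiset_eq_of_countP
      · exact fun x hx => Multiset.of_mem_filter hx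
      · exact fun x hx => p.parts_pos hx
      · intro v
        rw [pOfM_countP, toYD_count]
        congr 1
        apply Finset.filter_congr
        intro j _
        rw [h j]
    exact Nat.Partition.ext hparts
/-! ### Assembly -/

lemma ung_congr (k l : ℕ) {q q' p p' : ℕ → ℕ → ℕ} (hq : ∀ i, i ≤ k → q i = q' i)
    (hp : ∀ j, j ≤ l → p j = p' j) : ∀ s a b, a + b = s → ung k l q p a b = ung k l q' p' a b := by
  intro s
  induction s using Nat.strong_induction_on with
  | _ s ih =>
    intro a b hs
    match a, b with
    | 0, b => rw [ung_zero, ung_zero, hp (l - b) (by omega)]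
    | a + 1, 0 => rw [ung_zero', ung_zero', hq (k - (a + 1)) (by omega)]
    | a + 1, b + 1 =>
      rw [ung_succ, ung_succ, ih (a + 1 + b) (by omega) (a + 1) b rfl,
        ih (a + (b + 1)) (by omega) a (b + 1) rfl, ih (a + b) (by omega) a b rfl]

lemma grow_congr {M M' : ℕ → ℕ → ℕ} : ∀ s i j, i + j = s →
    (∀ i' j', i' < i → j' < j → M i' j' = M' i' j') → grow M i j = grow M' i j := by
  intro s
  induction s using Nat.strong_induction_on with
  | _ s ih =>
    intro i j hs h
    match i, j with
    | 0, j => rw [grow_zero, grow_zero]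
    | i + 1, 0 => rw [grow_zero', grow_zero']
    | i + 1, j + 1 =>
      rw [grow_succ, grow_succ, ih (i + j) (by omega) i j rfl (fun a b ha hb => h a b (by omega) (by omega)),
        ih (i + (j + 1)) (by omega) i (j + 1) rfl (fun a b ha hb => h a b (by omega) (by omega)),
        ih (i + 1 + j) (by omega) (i + 1) j rfl (fun a b ha hb => h a b (by omega) (by omega)),
        h i j (by omega) (by omega)]

section UngBoundary

variable {k l : ℕ} {q p : ℕ → ℕ → ℕ} (hqp : q k = p l)

include hqp in
lemma ung_bq (i : ℕ) (hi : i ≤ k) : ung k l q p (k - i) 0 = q i := by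
  rcases Nat.lt_or_ge i k with h | h
  · obtain ⟨a, ha⟩ : ∃ a, k - i = a + 1 := ⟨k - i - 1, by omega⟩
    rw [ha, ung_zero', show k - (a + 1) = i from by omega]
  · have hik : i = k := by omega
    rw [hik, Nat.sub_self, ung_zero, Nat.sub_zero, ← hqp]

lemma ung_bp (j : ℕ) (hj : j ≤ l) : ung k l q p 0 (l - j) = p j := by
  rw [ung_zero, show l - (l - j) = j from by omega]

end UngBoundary

section Assembly

variable {n : ℕ} (r c : Composition n)

/-- Extension of a matrix on `Fin k × Fin l` to `ℕ × ℕ` by zero. -/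
def matExt {k l : ℕ} (M : Fin k → Fin l → ℕ) : ℕ → ℕ → ℕ :=
  fun i j => if h : i < k ∧ j < l then M ⟨i, h.1⟩ ⟨j, h.2⟩ else 0

/-- The pair-of-chains predicate. -/
structure IsB (qp : (ℕ → ℕ → ℕ) × (ℕ → ℕ → ℕ)) : Prop where
  hq0 : qp.1 0 = fun _ => 0
  hp0 : qp.2 0 = fun _ => 0
  hqc : ∀ i, i < r.length → Itl (qp.1 i) (qp.1 (i + 1))
  hpc : ∀ j, j < c.length → Itl (qp.2 j) (qp.2 (j + 1))
  htop : qp.1 r.length = qp.2 c.length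
  hclq : ∀ i, r.length ≤ i → qp.1 i = qp.1 r.length
  hclp : ∀ j, c.length ≤ j → qp.2 j = qp.2 c.length
  hsq : ∀ i, Ssum (n + 1) (qp.1 (i + 1)) = Ssum (n + 1) (qp.1 i) + r.blocks.getD i 0
  hsp : ∀ j, Ssum (n + 1) (qp.2 (j + 1)) = Ssum (n + 1) (qp.2 j) + c.blocks.getD j 0

lemma getD_blocksFun (i : Fin r.length) : r.blocks.getD (i : ℕ) 0 = r.blocksFun i := by
  have h : (i : ℕ) < r.blocks.length := by rw [Composition.blocks_length]; exact i.2
  rw [List.getD_eq_getElem _ _ h]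
  rfl

lemma getD_zero_of_ge (i : ℕ) (hi : r.length ≤ i) : r.blocks.getD i 0 = 0 :=
  List.getD_eq_default _ _ (by rw [Composition.blocks_length]; omega)

lemma matExt_rowsum {M : Fin r.length → Fin c.length → ℕ} (i : Fin r.length) :
    ∑ j' ∈ Finset.range c.length, matExt M (i : ℕ) j' = ∑ j, M i j := by
  rw [← Fin.sum_univ_eq_sum_range (fun j' => matExt M (i : ℕ) j') c.length]
  apply Finset.sum_congr rfl
  intro j _
  rw [matExt, dif_pos ⟨i.2, j.2⟩]

lemma matExt_colsum {M : Fin r.length → Fin c.length → ℕ} (j : Fin c.length) :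
    ∑ i' ∈ Finset.range r.length, matExt M i' (j : ℕ) = ∑ i, M i j := by
  rw [← Fin.sum_univ_eq_sum_range (fun i' => matExt M i' (j : ℕ)) r.length]
  apply Finset.sum_congr rfl
  intro i _
  rw [matExt, dif_pos ⟨i.2, j.2⟩]

/-- Forward map: matrix to pair of chains. -/
lemma toB_isB (M : Fin r.length → Fin c.length → ℕ)
    (hrow : ∀ i, ∑ j, M i j = r.blocksFun i) (hcol : ∀ j, ∑ i, M i j = c.blocksFun j) :
    IsB r c (fun i => grow (matExt M) (min i r.length) c.length,
      fun j => grow (matExt M) r.length (min j c.length)) := by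
  have hk : r.length ≤ n := r.length_le
  have hl : c.length ≤ n := c.length_le
  refine ⟨?_, ?_, ?_, ?_, ?_, ?_, ?_, ?_, ?_⟩
  · show grow (matExt M) (min 0 r.length) c.length = fun _ => 0
    rw [min_eq_left (by omega), grow_zero]
  · show grow (matExt M) r.length (min 0 c.length) = fun _ => 0
    rw [min_eq_left (by omega), grow_zero']
  · intro i hi
    show Itl (grow (matExt M) (min i r.length) c.length)
      (grow (matExt M) (min (i + 1) r.length) c.length)
    rw [min_eq_left (by omega), min_eq_left (by omega)]
    exact (grow_itl (matExt M) i c.length).2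
  · intro j hj
    show Itl (grow (matExt M) r.length (min j c.length))
      (grow (matExt M) r.length (min (j + 1) c.length))
    rw [min_eq_left (by omega), min_eq_left (by omega)]
    exact (grow_itl (matExt M) r.length j).1
  · show grow (matExt M) (min r.length r.length) c.length
      = grow (matExt M) r.length (min c.length c.length)
    rw [min_self, min_self]
  · intro i hi
    show grow (matExt M) (min i r.length) c.length
      = grow (matExt M) (min r.length r.length) c.length
    rw [min_self, min_eq_right (by omega)]
  · intro j hj
    show grow (matExt M) r.length (min j c.length)
      = grow (matExt M) r.length (min c.length c.length)
    rw [min_self, min_eq_right (by omega)]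
  · intro i
    show Ssum (n + 1) (grow (matExt M) (min (i + 1) r.length) c.length)
      = Ssum (n + 1) (grow (matExt M) (min i r.length) c.length) + r.blocks.getD i 0
    rcases Nat.lt_or_ge i r.length with h | h
    · rw [min_eq_left (by omega), min_eq_left (by omega)]
      have hgr := grow_rowsum (matExt M) (n + 1) i c.length (by omega)
      rw [matExt_rowsum r c (⟨i, h⟩ : Fin r.length)] at hgr
      rw [hgr, hrow ⟨i, h⟩, getD_blocksFun r ⟨i, h⟩]
    · rw [min_eq_right (by omega), min_eq_right (by omega),
        getD_zero_of_ge r i h]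
      omega
  · intro j
    show Ssum (n + 1) (grow (matExt M) r.length (min (j + 1) c.length))
      = Ssum (n + 1) (grow (matExt M) r.length (min j c.length)) + c.blocks.getD j 0
    rcases Nat.lt_or_ge j c.length with h | h
    · rw [min_eq_left (by omega), min_eq_left (by omega)]
      have hgc := grow_colsum (matExt M) (n + 1) j r.length (by omega)
      rw [matExt_colsum r c (⟨j, h⟩ : Fin c.length)] at hgc
      rw [hgc, hcol ⟨j, h⟩, getD_blocksFun c ⟨j, h⟩]
    · rw [min_eq_right (by omega), min_eq_right (by omega), getD_zero_of_ge c j h]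
      omega

end Assembly
/-! ### The matrix–chain equivalence -/

/-- The matrix extracted from a pair of chains. -/
def MM (k l : ℕ) (q p : ℕ → ℕ → ℕ) : ℕ → ℕ → ℕ :=
  fun i j => bt (ung k l q p (k - i) (l - (j + 1))) (ung k l q p (k - (i + 1)) (l - j))
    (ung k l q p (k - (i + 1)) (l - (j + 1)))

section MMsec

variable {k l : ℕ} {q p : ℕ → ℕ → ℕ}
  (hqc : ∀ i, i < k → Itl (q i) (q (i + 1)))
  (hpc : ∀ j, j < l → Itl (p j) (p (j + 1)))
  (hqp : q k = p l)
  (hq0 : q 0 = fun _ => 0)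
  (hp0 : p 0 = fun _ => 0)

include hqc hpc hqp hq0 hp0 in
lemma grow_MM (i j : ℕ) (hi : i ≤ k) (hj : j ≤ l) :
    grow (MM k l q p) i j = ung k l q p (k - i) (l - j) :=
  grow_ung hqc hpc hqp hq0 hp0 (i + j) i j rfl hi hj

include hqc hpc hqp hq0 hp0 in
lemma grow_MM_q (i : ℕ) (hi : i ≤ k) : grow (MM k l q p) i l = q i := by
  rw [grow_MM hqc hpc hqp hq0 hp0 i l hi le_rfl, Nat.sub_self]
  exact ung_bq hqp i hi

include hqc hpc hqp hq0 hp0 in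
lemma grow_MM_p (j : ℕ) (hj : j ≤ l) : grow (MM k l q p) k j = p j := by
  rw [grow_MM hqc hpc hqp hq0 hp0 k j le_rfl hj, Nat.sub_self]
  exact ung_bp j hj

end MMsec

section Assembly2

variable {n : ℕ} (r c : Composition n)

/-- The type of matrices with given row and column sums. -/
abbrev MatT := {M : Fin r.length → Fin c.length → ℕ //
  (∀ i, ∑ j, M i j = r.blocksFun i) ∧ (∀ j, ∑ i, M i j = c.blocksFun j)}

/-- The type of pairs of chains. -/
abbrev BT := {qp : (ℕ → ℕ → ℕ) × (ℕ → ℕ → ℕ) // IsB r c qp}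

lemma MM_rowsum {qp : (ℕ → ℕ → ℕ) × (ℕ → ℕ → ℕ)} (hB : IsB r c qp) (i : Fin r.length) :
    ∑ j' ∈ Finset.range c.length, MM r.length c.length qp.1 qp.2 (i : ℕ) j' = r.blocksFun i := by
  obtain ⟨h1, h2, h3, h4, h5, h6, h7, h8, h9⟩ := hB
  have hk : r.length ≤ n := r.length_le
  have hgr := grow_rowsum (MM r.length c.length qp.1 qp.2) (n + 1) (i : ℕ) c.length
    (by omega)
  rw [grow_MM_q h3 h4 h5 h1 h2 (i + 1) (by omega),
    grow_MM_q h3 h4 h5 h1 h2 (i : ℕ) (by omega)] at hgr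
  have hstep := h8 (i : ℕ)
  rw [getD_blocksFun r i] at hstep
  omega

lemma MM_colsum {qp : (ℕ → ℕ → ℕ) × (ℕ → ℕ → ℕ)} (hB : IsB r c qp) (j : Fin c.length) :
    ∑ i' ∈ Finset.range r.length, MM r.length c.length qp.1 qp.2 i' (j : ℕ) = c.blocksFun j := by
  obtain ⟨h1, h2, h3, h4, h5, h6, h7, h8, h9⟩ := hB
  have hl : c.length ≤ n := c.length_le
  have hgc := grow_colsum (MM r.length c.length qp.1 qp.2) (n + 1) (j : ℕ) r.length
    (by omega)
  rw [grow_MM_p h3 h4 h5 h1 h2 (j + 1) (by omega),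
    grow_MM_p h3 h4 h5 h1 h2 (j : ℕ) (by omega)] at hgc
  have hstep := h9 (j : ℕ)
  rw [getD_blocksFun c j] at hstep
  omega

/-- The RSK equivalence between matrices and pairs of chains. -/
def rskEquiv : MatT r c ≃ BT r c where
  toFun M := ⟨(fun i => grow (matExt M.1) (min i r.length) c.length,
      fun j => grow (matExt M.1) r.length (min j c.length)),
    toB_isB r c M.1 M.2.1 M.2.2⟩
  invFun b := ⟨fun i j => MM r.length c.length b.1.1 b.1.2 (i : ℕ) (j : ℕ), by
    constructor
    · intro i
      rw [← MM_rowsum r c b.2 i, ← Fin.sum_univ_eq_sum_range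
        (fun j' => MM r.length c.length b.1.1 b.1.2 (i : ℕ) j') c.length]
    · intro j
      rw [← MM_colsum r c b.2 j, ← Fin.sum_univ_eq_sum_range
        (fun i' => MM r.length c.length b.1.1 b.1.2 i' (j : ℕ)) r.length]⟩
  left_inv := by
    rintro ⟨M, hrow, hcol⟩
    apply Subtype.ext
    funext i j
    show MM r.length c.length _ _ (i : ℕ) (j : ℕ) = M i j
    rw [MM]
    have hcong : ∀ a b,
        ung r.length c.length (fun i' => grow (matExt M) (min i' r.length) c.length)
          (fun j' => grow (matExt M) r.length (min j' c.length)) a b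
        = ung r.length c.length (fun i' => grow (matExt M) i' c.length)
          (fun j' => grow (matExt M) r.length j') a b := by
      intro a b
      exact ung_congr r.length c.length
        (fun i' hi' => by rw [min_eq_left hi'])
        (fun j' hj' => by rw [min_eq_left hj']) _ a b rfl
    rw [hcong, hcong, hcong]
    rw [ung_grow (matExt M) r.length c.length _ _ _ rfl (by omega) (by omega),
      ung_grow (matExt M) r.length c.length _ _ _ rfl (by omega) (by omega),
      ung_grow (matExt M) r.length c.length _ _ _ rfl (by omega) (by omega)]
    have e1 : r.length - (r.length - (i : ℕ)) = (i : ℕ) := by have := i.2; omega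
    have e2 : r.length - (r.length - ((i : ℕ) + 1)) = (i : ℕ) + 1 := by have := i.2; omega
    have e3 : c.length - (c.length - ((j : ℕ) + 1)) = (j : ℕ) + 1 := by have := j.2; omega
    have e4 : c.length - (c.length - (j : ℕ)) = (j : ℕ) := by have := j.2; omega
    rw [e1, e2, e3, e4, bt_grow]
    rw [matExt, dif_pos ⟨i.2, j.2⟩]
  right_inv := by
    rintro ⟨⟨q, p⟩, hB⟩
    obtain ⟨h1, h2, h3, h4, h5, h6, h7, h8, h9⟩ := hB
    apply Subtype.ext
    have hgc : ∀ i j, i ≤ r.length → j ≤ c.length →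
        grow (matExt (fun (i' : Fin r.length) (j' : Fin c.length) =>
          MM r.length c.length q p (i' : ℕ) (j' : ℕ))) i j
        = grow (MM r.length c.length q p) i j := by
      intro i j hi hj
      apply grow_congr (i + j) i j rfl
      intro i' j' hi' hj'
      rw [matExt, dif_pos ⟨by omega, by omega⟩]
    show ((fun i => grow _ (min i r.length) c.length, fun j => grow _ r.length (min j c.length))
      : (ℕ → ℕ → ℕ) × (ℕ → ℕ → ℕ)) = (q, p)
    have hq : (fun i => grow (matExt (fun (i' : Fin r.length) (j' : Fin c.length) =>
        MM r.length c.length q p (i' : ℕ) (j' : ℕ))) (min i r.length) c.length) = q := by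
      funext i
      rw [hgc _ _ (by omega) le_rfl, grow_MM_q h3 h4 h5 h1 h2 _ (by omega)]
      rcases Nat.lt_or_ge i r.length with h | h
      · rw [min_eq_left (by omega)]
      · rw [min_eq_right (by omega), ← h6 i (by omega)]
    have hp : (fun j => grow (matExt (fun (i' : Fin r.length) (j' : Fin c.length) =>
        MM r.length c.length q p (i' : ℕ) (j' : ℕ))) r.length (min j c.length)) = p := by
      funext j
      rw [hgc _ _ le_rfl (by omega), grow_MM_p h3 h4 h5 h1 h2 _ (by omega)]
      rcases Nat.lt_or_ge j c.length with h | h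
      · rw [min_eq_left (by omega)]
      · rw [min_eq_right (by omega), ← h7 j (by omega)]
    rw [hq, hp]

end Assembly2
/-! ### Fiber classification -/

section Fibers

variable {n : ℕ} (r c : Composition n)

lemma bt_q_telescope {qp : (ℕ → ℕ → ℕ) × (ℕ → ℕ → ℕ)} (hB : IsB r c qp) :
    ∀ m, Ssum (n + 1) (qp.1 m) = ∑ i ∈ Finset.range m, r.blocks.getD i 0 := by
  intro m
  induction m with
  | zero =>
    rw [hB.hq0]
    simp [Ssum]
  | succ m ih =>
    rw [Finset.sum_range_succ, ← ih, hB.hsq m]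

lemma bt_hsum (b : BT r c) : Ssum n (b.1.1 r.length) = n := by
  have h1 := bt_q_telescope r c b.2 r.length
  have h2 : ∑ i ∈ Finset.range r.length, r.blocks.getD i 0 = n := by
    rw [← Fin.sum_univ_eq_sum_range (fun i => r.blocks.getD i 0) r.length]
    rw [show ∑ i : Fin r.length, r.blocks.getD (i : ℕ) 0 = ∑ i, r.blocksFun i from
      Finset.sum_congr rfl (fun i _ => getD_blocksFun r i)]
    exact r.sum_blocksFun
  have hk : r.length ≤ n := r.length_le
  have hsupp : b.1.1 r.length n = 0 :=
    q_supp b.2.hq0 b.2.hqc r.length le_rfl n (by omega)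
  have h3 := Ssum_succ n (b.1.1 r.length)
  omega

lemma bt_anti (b : BT r c) : ∀ x, b.1.1 r.length (x + 1) ≤ b.1.1 r.length x :=
  fun x => q_anti b.2.hq0 b.2.hqc le_rfl (Nat.le_succ x) trivial

lemma bt_supp (b : BT r c) : ∀ x, n ≤ x → b.1.1 r.length x = 0 := by
  intro x hx
  have hk : r.length ≤ n := r.length_le
  exact q_supp b.2.hq0 b.2.hqc r.length le_rfl x (by omega)

/-- The shape of a pair of chains, as a partition. -/
def phi (b : BT r c) : n.Partition := pOf n (b.1.1 r.length) (bt_hsum r c b)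

/-- Fibers of the shape map. -/
abbrev Fib (p : n.Partition) := {b : BT r c // phi r c b = p}

variable (p : n.Partition)

lemma toYD_rows_zero : ∀ j, n + 1 ≤ j → (toYD p).rowLen j = 0 :=
  fun j hj => toYD_rowLen_zero p j (by omega)

lemma fib_topq (b : Fib r c p) : ∀ x, b.1.1.1 r.length x = (toYD p).rowLen x :=
  (pOf_eq_iff p _ (bt_anti r c b.1) (bt_supp r c b.1) (bt_hsum r c b.1)).1 b.2

lemma fib_toppc (b : Fib r c p) : ∀ x, b.1.1.2 c.length x = (toYD p).rowLen x := by
  intro x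
  rw [← congrFun b.1.2.htop x]
  exact fib_topq r c p b x

lemma cnt_isB (T : {T : SemistandardYoungTableau (toYD p) //
      ∀ j, ssytWeight T j = r.blocks.getD j 0})
    (U : {T : SemistandardYoungTableau (toYD p) //
      ∀ j, ssytWeight T j = c.blocks.getD j 0}) :
    IsB r c (cnt (toYD p) T.1, cnt (toYD p) U.1) := by
  have hTk : ∀ j x, (j, x) ∈ toYD p → T.1 j x < r.length :=
    entry_lt T.1 r.length _ T.2 (fun v hv => getD_zero_of_ge r v hv)
  have hUl : ∀ j x, (j, x) ∈ toYD p → U.1 j x < c.length :=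
    entry_lt U.1 c.length _ U.2 (fun v hv => getD_zero_of_ge c v hv)
  refine ⟨cnt_zero _, cnt_zero _, fun i _ => cnt_itl _ i, fun j _ => cnt_itl _ j, ?_,
    fun i hi => cnt_clamp _ _ hTk i hi, fun j hj => cnt_clamp _ _ hUl j hj, ?_, ?_⟩
  · funext x
    show cnt (toYD p) T.1 r.length x = cnt (toYD p) U.1 c.length x
    rw [cnt_top _ _ hTk x, cnt_top _ _ hUl x]
  · intro i
    show Ssum (n + 1) (cnt (toYD p) T.1 (i + 1))
      = Ssum (n + 1) (cnt (toYD p) T.1 i) + r.blocks.getD i 0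
    rw [cnt_sum_step T.1 (n + 1) (toYD_rows_zero p) i, T.2 i]
  · intro j
    show Ssum (n + 1) (cnt (toYD p) U.1 (j + 1))
      = Ssum (n + 1) (cnt (toYD p) U.1 j) + c.blocks.getD j 0
    rw [cnt_sum_step U.1 (n + 1) (toYD_rows_zero p) j, U.2 j]

lemma cnt_phi (T : {T : SemistandardYoungTableau (toYD p) //
      ∀ j, ssytWeight T j = r.blocks.getD j 0})
    (U : {T : SemistandardYoungTableau (toYD p) //
      ∀ j, ssytWeight T j = c.blocks.getD j 0}) :
    phi r c ⟨(cnt (toYD p) T.1, cnt (toYD p) U.1), cnt_isB r c p T U⟩ = p := by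
  have hTk : ∀ j x, (j, x) ∈ toYD p → T.1 j x < r.length :=
    entry_lt T.1 r.length _ T.2 (fun v hv => getD_zero_of_ge r v hv)
  have hanti : ∀ i, cnt (toYD p) T.1 r.length (i + 1) ≤ cnt (toYD p) T.1 r.length i := by
    intro i
    rw [cnt_top _ _ hTk, cnt_top _ _ hTk]
    exact (toYD p).rowLen_anti i (i + 1) (by omega)
  have hsupp : ∀ i, n ≤ i → cnt (toYD p) T.1 r.length i = 0 := by
    intro i hi
    rw [cnt_top _ _ hTk]
    exact toYD_rowLen_zero p i hi
  exact (pOf_eq_iff p (cnt (toYD p) T.1 r.length) hanti hsupp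
    (bt_hsum r c ⟨(cnt (toYD p) T.1, cnt (toYD p) U.1), cnt_isB r c p T U⟩)).2
    (fun x => cnt_top _ _ hTk x)

/-- The fiber equivalence: pairs of chains with shape `p` correspond to pairs of tableaux. -/
def fibEquiv : Fib r c p ≃
    ({T : SemistandardYoungTableau (toYD p) // ∀ j, ssytWeight T j = r.blocks.getD j 0} ×
     {T : SemistandardYoungTableau (toYD p) // ∀ j, ssytWeight T j = c.blocks.getD j 0}) where
  toFun b :=
    (⟨tabOf (toYD p) r.length b.1.1.1 b.1.2.hq0 b.1.2.hqc (fib_topq r c p b),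
      tabOf_weight b.1.2.hq0 b.1.2.hqc (fib_topq r c p b) b.1.2.hclq (n + 1)
        (toYD_rows_zero p) _ b.1.2.hsq⟩,
     ⟨tabOf (toYD p) c.length b.1.1.2 b.1.2.hp0 b.1.2.hpc (fib_toppc r c p b),
      tabOf_weight b.1.2.hp0 b.1.2.hpc (fib_toppc r c p b) b.1.2.hclp (n + 1)
        (toYD_rows_zero p) _ b.1.2.hsp⟩)
  invFun TU := ⟨⟨(cnt (toYD p) TU.1.1, cnt (toYD p) TU.2.1), cnt_isB r c p TU.1 TU.2⟩,
    cnt_phi r c p TU.1 TU.2⟩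
  left_inv := by
    rintro ⟨⟨⟨q, pc⟩, hB⟩, hphi⟩
    apply Subtype.ext
    apply Subtype.ext
    refine Prod.ext ?_ ?_
    · funext i
      exact cnt_tabOf hB.hq0 hB.hqc
        (fib_topq r c p ⟨⟨(q, pc), hB⟩, hphi⟩) hB.hclq i
    · funext j
      exact cnt_tabOf hB.hp0 hB.hpc
        (fib_toppc r c p ⟨⟨(q, pc), hB⟩, hphi⟩) hB.hclp j
  right_inv := by
    rintro ⟨⟨T, hT⟩, ⟨U, hU⟩⟩
    have hTk : ∀ j x, (j, x) ∈ toYD p → T j x < r.length :=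
      entry_lt T r.length _ hT (fun v hv => getD_zero_of_ge r v hv)
    have hUl : ∀ j x, (j, x) ∈ toYD p → U j x < c.length :=
      entry_lt U c.length _ hU (fun v hv => getD_zero_of_ge c v hv)
    refine Prod.ext (Subtype.ext ?_) (Subtype.ext ?_)
    · exact tabOf_cnt T hTk (fun j => cnt_top T r.length hTk j)
    · exact tabOf_cnt U hUl (fun j => cnt_top U c.length hUl j)

end Fibers

/-- The number of matrices with non-negative integer entries with row sums `r` and
column sums `c` equals `Σ_{λ ⊢ n} K_{λ,r} K_{λ,c}`. -/
theorem stmt8 (n : ℕ) (r c : Composition n) :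
    Nat.card {M : Fin r.length → Fin c.length → ℕ //
        (∀ i, ∑ j, M i j = r.blocksFun i) ∧ (∀ j, ∑ i, M i j = c.blocksFun j)} =
      ∑ p : n.Partition, kostka (toYD p) r * kostka (toYD p) c := by
  have hbound : ∀ (M : MatT r c) (i : Fin r.length) (j : Fin c.length), M.1 i j < n + 1 := by
    intro M i j
    have h1 : M.1 i j ≤ ∑ j', M.1 i j' :=
      Finset.single_le_sum (f := fun j' => M.1 i j') (fun _ _ => Nat.zero_le _)
        (Finset.mem_univ j)
    have h2 := M.2.1 i
    have h3 := r.blocksFun_le i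
    omega
  haveI hfinM : Finite (MatT r c) := by
    apply Finite.of_injective (fun M : MatT r c => fun (i : Fin r.length) (j : Fin c.length) =>
      (⟨M.1 i j, hbound M i j⟩ : Fin (n + 1)))
    intro M M' h
    apply Subtype.ext
    funext i j
    exact congrArg Fin.val (congrFun (congrFun h i) j)
  haveI hfinB : Finite (BT r c) := Finite.of_equiv _ (rskEquiv r c)
  haveI hfinF : ∀ p : n.Partition, Finite (Fib r c p) := fun p => inferInstance
  letI ftF : ∀ p : n.Partition, Fintype (Fib r c p) := fun p => Fintype.ofFinite _
  calc Nat.card (MatT r c) = Nat.card (BT r c) := Nat.card_congr (rskEquiv r c)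
    _ = Nat.card (Σ p : n.Partition, Fib r c p) :=
        (Nat.card_congr (Equiv.sigmaFiberEquiv (phi r c))).symm
    _ = ∑ p : n.Partition, Nat.card (Fib r c p) := by
        rw [Nat.card_eq_fintype_card, Fintype.card_sigma]
        exact Finset.sum_congr rfl fun p _ => (Nat.card_eq_fintype_card).symm
    _ = ∑ p : n.Partition, kostka (toYD p) r * kostka (toYD p) c := by
        apply Finset.sum_congr rfl
        intro p _
        rw [Nat.card_congr (fibEquiv r c p), Nat.card_prod]
        rfl
end
end

section
/- For compositions p, q, r of n, the number of three-dimensional arrays M = (M_{i,j,k}) with non-negative integer entries such that Σ_{i,j} M_{i,j,k} = p_k, Σ_{i,k} M_{i,j,k} = q_j, and Σ_{j,k} M_{i,j,k} = r_i equals Σ_{λ,μ,ν ⊢ n} g(λ,μ,ν) K_{λ,p} K_{μ,q} K_{ν,r}. -/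
open scoped Classical

noncomputable section

/-- The Schur function of shape `μ`, in variables `x_0, x_1, x_2, ...`. -/
def schur (μ : YoungDiagram) : MvPowerSeries ℕ ℂ :=
  fun d => (Nat.card {T : SemistandardYoungTableau μ // ∀ j, ssytWeight T j = d j} : ℂ)

/-- The power sum symmetric function `p_k = Σ_i x_i^k`. -/
def psum (k : ℕ) : MvPowerSeries ℕ ℂ :=
  fun d => if ∃ i, d = Finsupp.single i k then 1 else 0

/-- Product of power sums over a multiset of integers. -/
def pProd (m : Multiset ℕ) : MvPowerSeries ℕ ℂ := (m.map psum).prod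

/-- The full cycle type of a permutation of `Fin n` (including fixed points as parts `1`). -/
def fullCycleType {n : ℕ} (σ : Equiv.Perm (Fin n)) : Multiset ℕ :=
  σ.cycleType + Multiset.replicate (n - σ.cycleType.sum) 1

/-! ### Auxiliary material -/

open Finset Equiv Equiv.Perm MulAction

/-- The size of the fiber of `f` over `b`. -/
def fib {α β : Type*} [Fintype α] (f : α → β) (b : β) : ℕ :=
  (Finset.univ.filter fun x => f x = b).card

section A

/-- Coefficient of a finite product of power sums. -/
lemma coeff_prod_psum {ι : Type} [Fintype ι] (sz : ι → ℕ) (hsz : ∀ i, sz i ≠ 0)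
    (d : ℕ →₀ ℕ) :
    MvPowerSeries.coeff d (∏ i : ι, psum (sz i)) =
      (Nat.card {φ : ι → ℕ // ∑ i, Finsupp.single (φ i) (sz i) = d} : ℂ) := by
  classical
  rw [MvPowerSeries.coeff_prod]
  have h1 : ∀ l ∈ Finset.finsuppAntidiag (Finset.univ : Finset ι) d,
      (∏ i : ι, MvPowerSeries.coeff (l i) (psum (sz i))) =
        if (∀ i : ι, ∃ x, l i = Finsupp.single x (sz i)) then (1 : ℂ) else 0 := by
    intro l _
    rw [show (∏ i : ι, MvPowerSeries.coeff (l i) (psum (sz i))) =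
        ∏ i : ι, if (∃ x, l i = Finsupp.single x (sz i)) then (1:ℂ) else 0 from rfl]
    exact Fintype.prod_boole
  rw [Finset.sum_congr rfl h1, Finset.sum_boole]
  norm_cast
  rw [← Nat.card_eq_finsetCard]
  apply Nat.card_congr
  refine Equiv.symm (Equiv.ofBijective (fun φ =>
    ⟨Finsupp.equivFunOnFinite.symm (fun i => Finsupp.single (φ.1 i) (sz i)), ?_⟩) ⟨?_, ?_⟩)
  · simp only [Finset.mem_filter, Finset.mem_finsuppAntidiag]
    refine ⟨⟨?_, by simp⟩, fun i => ⟨φ.1 i, by simp⟩⟩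
    have := φ.2
    simpa using this
  · rintro ⟨φ, hφ⟩ ⟨φ', hφ'⟩ h
    simp only [Subtype.mk.injEq] at h ⊢
    funext i
    have := congrFun (congrArg (fun (f : ι →₀ (ℕ →₀ ℕ)) => (f : ι → (ℕ →₀ ℕ))) h) i
    simpa [Finsupp.single_left_inj (hsz i)] using this
  · rintro ⟨l, hl⟩
    simp only [Finset.mem_filter, Finset.mem_finsuppAntidiag] at hl
    obtain ⟨⟨hsum, -⟩, hex⟩ := hl
    refine ⟨⟨fun i => (hex i).choose, ?_⟩, ?_⟩
    · have : ∀ i : ι, Finsupp.single ((hex i).choose) (sz i) = l i :=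
        fun i => ((hex i).choose_spec).symm
      rw [Finset.sum_congr rfl (fun i _ => this i)]
      exact hsum
    · apply Subtype.ext
      apply Finsupp.ext
      intro i
      simp only [Finsupp.equivFunOnFinite_symm_apply_apply]
      rw [← (hex i).choose_spec]

end A

section BC

variable {n : ℕ}

abbrev cycIdx (σ : Perm (Fin n)) : Type :=
  ↥σ.cycleFactorsFinset ⊕ ↥(σ.supportᶜ : Finset (Fin n))

def csz (σ : Perm (Fin n)) : cycIdx σ → ℕ :=
  Sum.elim (fun c => (c : Perm (Fin n)).support.card) (fun _ => 1)

lemma csz_ne_zero (σ : Perm (Fin n)) (i : cycIdx σ) : csz σ i ≠ 0 := by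
  cases i with
  | inl c =>
    have h2 : 2 ≤ (c : Perm (Fin n)).support.card :=
      (Equiv.Perm.mem_cycleFactorsFinset_iff.mp c.2).1.two_le_card_support
    simp only [csz, Sum.elim_inl]; omega
  | inr x => simp [csz]

lemma pProd_fullCycleType_eq (σ : Perm (Fin n)) :
    pProd (fullCycleType σ) = ∏ i : cycIdx σ, psum (csz σ i) := by
  rw [fullCycleType, pProd, Multiset.map_add, Multiset.prod_add]
  rw [Fintype.prod_sum_type]
  congr 1
  · show (Multiset.map psum σ.cycleType).prod =
      ∏ a : ↥σ.cycleFactorsFinset, (fun c : Perm (Fin n) => psum c.support.card) (a : Perm (Fin n))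
    rw [Finset.prod_coe_sort σ.cycleFactorsFinset (fun c => psum c.support.card)]
    rw [Equiv.Perm.cycleType_def, Multiset.map_map]
    rfl
  · show (Multiset.map psum (Multiset.replicate (n - σ.cycleType.sum) 1)).prod =
      ∏ _a : ↥(σ.supportᶜ : Finset (Fin n)), psum 1
    rw [Multiset.map_replicate, Multiset.prod_replicate, Finset.prod_const]
    congr 1
    rw [Finset.card_univ, Fintype.card_coe, Finset.card_compl, Equiv.Perm.sum_cycleType,
      Fintype.card_fin]

def blk (σ : Perm (Fin n)) : cycIdx σ → Finset (Fin n) :=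
  Sum.elim (fun c => (c : Perm (Fin n)).support) (fun x => {x.1})

def idxOf (σ : Perm (Fin n)) (x : Fin n) : cycIdx σ :=
  if h : x ∈ σ.support then
    Sum.inl ⟨σ.cycleOf x, Equiv.Perm.cycleOf_mem_cycleFactorsFinset_iff.mpr h⟩
  else Sum.inr ⟨x, Finset.mem_compl.mpr h⟩

def cycRep (σ : Perm (Fin n)) (i : cycIdx σ) : Fin n :=
  Sum.elim (fun c =>
    ((Equiv.Perm.mem_cycleFactorsFinset_iff.mp c.2).1.nonempty_support).choose
    ) (fun x => x.1) i

lemma mem_blk_iff (σ : Perm (Fin n)) (x : Fin n) (i : cycIdx σ) :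
    x ∈ blk σ i ↔ idxOf σ x = i := by
  constructor
  · intro hx
    cases i with
    | inl c =>
      have hxs : x ∈ σ.support :=
        Equiv.Perm.mem_cycleFactorsFinset_support_le c.2 hx
      have : (c : Perm (Fin n)) = σ.cycleOf x := Equiv.Perm.cycle_is_cycleOf hx c.2
      rw [idxOf, dif_pos hxs]
      congr 1
      exact Subtype.ext this.symm
    | inr y =>
      have hxy : x = y.1 := Finset.mem_singleton.mp hx
      have : x ∉ σ.support := by
        rw [hxy]; exact Finset.mem_compl.mp y.2
      rw [idxOf, dif_neg this]
      congr 1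
      exact Subtype.ext hxy
  · rintro rfl
    rw [idxOf]
    split_ifs with h
    · simp only [blk, Sum.elim_inl]
      rw [Equiv.Perm.mem_support_cycleOf_iff]
      exact ⟨Equiv.Perm.SameCycle.refl σ x, h⟩
    · simp [blk]

lemma card_blk (σ : Perm (Fin n)) (i : cycIdx σ) : (blk σ i).card = csz σ i := by
  cases i <;> simp [blk, csz]

lemma cycRep_mem_blk (σ : Perm (Fin n)) (i : cycIdx σ) : cycRep σ i ∈ blk σ i := by
  cases i with
  | inl c => exact ((Equiv.Perm.mem_cycleFactorsFinset_iff.mp c.2).1.nonempty_support).choose_spec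
  | inr x => simp [cycRep, blk]

lemma idxOf_cycRep (σ : Perm (Fin n)) (i : cycIdx σ) : idxOf σ (cycRep σ i) = i :=
  (mem_blk_iff σ _ i).mp (cycRep_mem_blk σ i)

lemma idxOf_apply (σ : Perm (Fin n)) (x : Fin n) : idxOf σ (σ x) = idxOf σ x := by
  by_cases h : x ∈ σ.support
  · have h' : σ x ∈ σ.support := Equiv.Perm.apply_mem_support.mpr h
    rw [idxOf, idxOf, dif_pos h, dif_pos h']
    congr 1
    exact Subtype.ext (Equiv.Perm.cycleOf_self_apply σ x)
  · rw [Equiv.Perm.notMem_support.mp h]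

lemma invariant_pow {β : Type*} (σ : Perm (Fin n)) (f : Fin n → β)
    (hf : ∀ x, f (σ x) = f x) (k : ℕ) (x : Fin n) : f ((σ ^ k) x) = f x := by
  induction k generalizing x with
  | zero => simp
  | succ m ih => rw [pow_succ, Equiv.Perm.mul_apply, ih (σ x), hf]

lemma invariant_const_on {β : Type*} (σ : Perm (Fin n)) (f : Fin n → β)
    (hf : ∀ x, f (σ x) = f x) {x y : Fin n} (h : idxOf σ x = idxOf σ y) : f x = f y := by
  have hy : y ∈ blk σ (idxOf σ x) := by rw [h]; exact (mem_blk_iff σ y _).mpr rfl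
  by_cases hx : x ∈ σ.support
  · rw [idxOf, dif_pos hx] at hy
    simp only [blk, Sum.elim_inl] at hy
    have hsc : σ.SameCycle x y := ((Equiv.Perm.mem_support_cycleOf_iff).mp hy).1
    obtain ⟨k, -, hk⟩ := hsc.exists_pow_eq'
    rw [← hk, invariant_pow σ f hf]
  · rw [idxOf, dif_neg hx] at hy
    simp only [blk, Sum.elim_inr, Finset.mem_singleton] at hy
    rw [hy]

lemma fiber_card_eq {β : Type*} [DecidableEq β] (σ : Perm (Fin n)) (f : Fin n → β)
    (hf : ∀ x, f (σ x) = f x) (j : β) :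
    fib f j = ∑ i : cycIdx σ, if f (cycRep σ i) = j then csz σ i else 0 := by
  rw [fib]
  rw [Finset.card_eq_sum_card_fiberwise (f := idxOf σ) (t := Finset.univ)
    (fun x _ => Finset.mem_univ _)]
  refine Finset.sum_congr rfl fun i _ => ?_
  by_cases h : f (cycRep σ i) = j
  · rw [if_pos h, ← card_blk σ i]
    congr 1
    ext x
    simp only [Finset.mem_filter, Finset.mem_univ, true_and, mem_blk_iff]
    constructor
    · rintro ⟨-, h2⟩; exact h2
    · intro h2
      refine ⟨?_, h2⟩
      rw [invariant_const_on σ f hf (h2.trans (idxOf_cycRep σ i).symm)]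
      exact h
  · rw [if_neg h]
    rw [Finset.card_eq_zero]
    ext x
    simp only [Finset.mem_filter, Finset.mem_univ, true_and, Finset.notMem_empty,
      iff_false, not_and]
    intro hfx hix
    exact h (by rw [← invariant_const_on σ f hf (hix.trans (idxOf_cycRep σ i).symm), hfx])

lemma card_phi_eq_card_inv (σ : Perm (Fin n)) (d : ℕ →₀ ℕ) :
    Nat.card {φ : cycIdx σ → ℕ // ∑ i, Finsupp.single (φ i) (csz σ i) = d} =
      Nat.card {f : Fin n → ℕ // (∀ x, f (σ x) = f x) ∧ ∀ j, fib f j = d j} := by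
  apply Nat.card_congr
  have key : ∀ (φ : cycIdx σ → ℕ) (j : ℕ),
      (∑ i, Finsupp.single (φ i) (csz σ i)) j = ∑ i, if φ i = j then csz σ i else 0 := by
    intro φ j
    rw [Finsupp.finset_sum_apply]
    exact Finset.sum_congr rfl fun i _ => Finsupp.single_apply
  refine ⟨fun φ => ⟨fun x => φ.1 (idxOf σ x),
      fun x => congrArg φ.1 (idxOf_apply σ x), fun j => ?_⟩,
    fun f => ⟨fun i => f.1 (cycRep σ i), ?_⟩, fun φ => ?_, fun f => ?_⟩
  · calc fib (fun x => φ.1 (idxOf σ x)) j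
        = ∑ i : cycIdx σ, if φ.1 (idxOf σ (cycRep σ i)) = j then csz σ i else 0 :=
          fiber_card_eq σ _ (fun x => congrArg φ.1 (idxOf_apply σ x)) j
      _ = ∑ i : cycIdx σ, if φ.1 i = j then csz σ i else 0 :=
          Finset.sum_congr rfl fun i _ => by rw [idxOf_cycRep]
      _ = (∑ i, Finsupp.single (φ.1 i) (csz σ i)) j := (key φ.1 j).symm
      _ = d j := by rw [φ.2]
  · apply Finsupp.ext
    intro j
    exact (key _ j).trans ((fiber_card_eq σ f.1 f.2.1 j).symm.trans (f.2.2 j))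
  · apply Subtype.ext
    funext i
    simp only
    rw [idxOf_cycRep]
  · apply Subtype.ext
    funext x
    simp only
    exact invariant_const_on σ _ f.2.1 (idxOf_cycRep σ (idxOf σ x))

end BC

section D

variable {n : ℕ}

def dComp (p : Composition n) : ℕ →₀ ℕ :=
  Finsupp.onFinset (Finset.range p.length) (fun j => p.blocks.getD j 0) (by
    intro j h
    rw [Finset.mem_range]
    by_contra hj
    exact h (List.getD_eq_default _ _ (by rw [p.blocks_length]; omega)))

lemma dComp_apply (p : Composition n) (j : ℕ) : dComp p j = p.blocks.getD j 0 := rfl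

lemma dComp_lt (p : Composition n) (j : ℕ) (h : j < p.length) :
    dComp p j = p.blocksFun ⟨j, h⟩ := by
  rw [dComp_apply, Composition.blocksFun]
  rw [List.getD_eq_getElem _ _ (by rw [p.blocks_length]; omega)]
  simp [List.get_eq_getElem]

lemma dComp_ge (p : Composition n) (j : ℕ) (h : p.length ≤ j) : dComp p j = 0 :=
  List.getD_eq_default _ _ (by rw [p.blocks_length]; omega)

lemma card_inv_nat_eq_fin (σ : Perm (Fin n)) (p : Composition n) :
    Nat.card {f : Fin n → ℕ // (∀ x, f (σ x) = f x) ∧ ∀ j, fib f j = dComp p j} =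
      Nat.card {f : Fin n → Fin p.length // (∀ x, f (σ x) = f x) ∧
        ∀ k, fib f k = p.blocksFun k} := by
  apply Nat.card_congr
  have hlt : ∀ (f : Fin n → ℕ), (∀ j, fib f j = dComp p j) → ∀ x, f x < p.length := by
    intro f hf x
    by_contra h
    have h0 : fib f (f x) = 0 := by
      rw [hf (f x), dComp_ge p _ (by omega)]
    rw [fib, Finset.card_eq_zero] at h0
    have hx0 : x ∈ (∅ : Finset (Fin n)) := by rw [← h0]; simp
    exact absurd hx0 (Finset.notMem_empty x)
  refine ⟨fun f => ⟨fun x => ⟨f.1 x, hlt f.1 f.2.2 x⟩, fun x => ?_, fun k => ?_⟩,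
    fun g => ⟨fun x => (g.1 x : ℕ), fun x => congrArg Fin.val (g.2.1 x), fun j => ?_⟩,
    fun f => ?_, fun g => ?_⟩
  · exact Fin.ext (f.2.1 x)
  · have : fib (fun x => (⟨f.1 x, hlt f.1 f.2.2 x⟩ : Fin p.length)) k = fib f.1 (k : ℕ) := by
      rw [fib, fib]
      congr 1
      ext x
      simp [Fin.ext_iff]
    rw [this, f.2.2 (k : ℕ), dComp_lt p _ k.2]
  · by_cases h : j < p.length
    · have : fib (fun x => (g.1 x : ℕ)) j = fib g.1 ⟨j, h⟩ := by
        rw [fib, fib]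
        congr 1
        ext x
        simp [Fin.ext_iff]
      rw [this, g.2.2 ⟨j, h⟩, dComp_lt p j h]
    · have : fib (fun x => (g.1 x : ℕ)) j = 0 := by
        rw [fib, Finset.card_eq_zero]
        ext x
        simp only [Finset.mem_filter, Finset.mem_univ, true_and, Finset.notMem_empty, iff_false]
        intro hx
        exact h (hx ▸ (g.1 x).2)
      rw [this, dComp_ge p j (by omega)]
  · exact Subtype.ext rfl
  · exact Subtype.ext (funext fun x => Fin.ext rfl)

end D

section E

variable {n : ℕ}

lemma fib_comp (e : Equiv.Perm (Fin n)) {β : Type*} (f : Fin n → β) (b : β) :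
    fib (fun x => f (e x)) b = fib f b := by
  rw [fib, fib]
  refine Finset.card_bij' (fun x _ => e x) (fun y _ => e.symm y) ?_ ?_ ?_ ?_ <;> simp

def Xset (p : Composition n) : Type :=
  {f : Fin n → Fin p.length // ∀ k, fib f k = p.blocksFun k}

instance (p : Composition n) : Fintype (Xset p) := by unfold Xset; infer_instance

instance XsetSMul (p : Composition n) : SMul (Equiv.Perm (Fin n)) (Xset p) :=
  ⟨fun σ f => ⟨fun x => f.1 (σ⁻¹ x), fun k => (fib_comp σ⁻¹ f.1 k).trans (f.2 k)⟩⟩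

lemma Xset_smul_apply {p : Composition n} (σ : Equiv.Perm (Fin n)) (f : Xset p) (x : Fin n) :
    (σ • f).1 x = f.1 (σ⁻¹ x) := rfl

instance XsetAction (p : Composition n) : MulAction (Equiv.Perm (Fin n)) (Xset p) where
  one_smul f := Subtype.ext (funext fun x => by rw [Xset_smul_apply]; simp)
  mul_smul σ τ f := Subtype.ext (funext fun x => by
    rw [Xset_smul_apply, Xset_smul_apply, Xset_smul_apply, mul_inv_rev, Equiv.Perm.mul_apply])

def fixedByProdEquiv {G X Y : Type*} [Group G] [MulAction G X] [MulAction G Y] (g : G) :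
    (fixedBy (X × Y) g) ≃ (fixedBy X g) × (fixedBy Y g) where
  toFun z := (⟨z.1.1, (Prod.ext_iff.mp z.2).1⟩, ⟨z.1.2, (Prod.ext_iff.mp z.2).2⟩)
  invFun w := ⟨(w.1.1, w.2.1), Prod.ext w.1.2 w.2.2⟩
  left_inv z := Subtype.ext rfl
  right_inv w := rfl

def fixedByXsetEquiv (p : Composition n) (σ : Equiv.Perm (Fin n)) :
    (fixedBy (Xset p) σ) ≃ {f : Fin n → Fin p.length // (∀ x, f (σ x) = f x) ∧
      ∀ k, fib f k = p.blocksFun k} where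
  toFun F := ⟨F.1.1, fun x => by
      have h := congrFun (congrArg Subtype.val F.2) (σ x)
      rw [Xset_smul_apply] at h
      simpa using h.symm, F.1.2⟩
  invFun f := ⟨⟨f.1, f.2.2⟩, Subtype.ext (funext fun x => by
      show f.1 (σ⁻¹ x) = f.1 x
      have := f.2.1 (σ⁻¹ x)
      simpa using this.symm)⟩
  left_inv F := Subtype.ext (Subtype.ext rfl)
  right_inv f := Subtype.ext rfl

/-- fiber-splitting of counts -/
lemma FIB {TT β' : Type*} [Fintype TT] [DecidableEq β'] (G : Fin n → TT) (π : TT → β') (b : β') :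
    fib (fun x => π (G x)) b = ∑ t : TT, if π t = b then fib G t else 0 := by
  classical
  rw [fib]
  rw [Finset.card_eq_sum_card_fiberwise (f := G) (t := Finset.univ) (fun x _ => Finset.mem_univ _)]
  refine Finset.sum_congr rfl fun t _ => ?_
  by_cases h : π t = b
  · rw [if_pos h, fib]
    congr 1
    ext x
    simp only [Finset.mem_filter, Finset.mem_univ, true_and]
    constructor
    · rintro ⟨-, h2⟩; exact h2
    · intro h2; exact ⟨by rw [h2, h], h2⟩
  · rw [if_neg h, Finset.card_eq_zero]
    ext x
    simp only [Finset.mem_filter, Finset.mem_univ, true_and, Finset.notMem_empty, iff_false,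
      not_and]
    intro h1 h2
    rw [← h2] at h
    exact h h1

variable (p q r : Composition n)

abbrev TrT (p q r : Composition n) : Type := Fin r.length × Fin q.length × Fin p.length

abbrev BB (p q r : Composition n) : Type := Xset r × Xset q × Xset p

variable {p q r}

def JJ (F : BB p q r) : Fin n → TrT p q r := fun x => (F.1.1 x, F.2.1.1 x, F.2.2.1 x)

def Mof (F : BB p q r) : Fin r.length → Fin q.length → Fin p.length → ℕ :=
  fun i j k => fib (JJ F) (i, j, k)

lemma Mof_smul (σ : Equiv.Perm (Fin n)) (F : BB p q r) : Mof (σ • F) = Mof F := by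
  funext i j k
  show fib (JJ (σ • F)) (i,j,k) = fib (JJ F) (i,j,k)
  rw [show JJ (σ • F) = fun x => JJ F (σ⁻¹ x) from rfl]
  exact fib_comp σ⁻¹ (JJ F) (i,j,k)

lemma margin_p (G : Fin n → TrT p q r) (k : Fin p.length) :
    fib (fun x => (G x).2.2) k = ∑ i, ∑ j, fib G (i, j, k) := by
  rw [FIB G (fun t => t.2.2) k, Fintype.sum_prod_type]
  refine Finset.sum_congr rfl fun i _ => ?_
  rw [Fintype.sum_prod_type]
  refine Finset.sum_congr rfl fun j _ => ?_
  simp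

lemma margin_q (G : Fin n → TrT p q r) (j : Fin q.length) :
    fib (fun x => (G x).2.1) j = ∑ i, ∑ k, fib G (i, j, k) := by
  rw [FIB G (fun t => t.2.1) j, Fintype.sum_prod_type]
  refine Finset.sum_congr rfl fun i _ => ?_
  rw [Fintype.sum_prod_type, Finset.sum_comm]
  refine Finset.sum_congr rfl fun k _ => ?_
  simp

lemma margin_r (G : Fin n → TrT p q r) (i : Fin r.length) :
    fib (fun x => (G x).1) i = ∑ j, ∑ k, fib G (i, j, k) := by
  have hrhs : (∑ j : Fin q.length, ∑ k : Fin p.length, fib G (i,j,k)) =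
      ∑ y : Fin q.length × Fin p.length, fib G (i, y.1, y.2) :=
    (Fintype.sum_prod_type (f := fun y : Fin q.length × Fin p.length => fib G (i, y.1, y.2))).symm
  rw [FIB G (fun t => t.1) i, Fintype.sum_prod_type, Finset.sum_comm, hrhs]
  refine Finset.sum_congr rfl fun y _ => ?_
  simp

end E

section ORB

variable {n : ℕ} {p q r : Composition n}

lemma fib_eq_natcard {α β : Type*} [Fintype α] (f : α → β) (b : β) :
    fib f b = Nat.card {x // f x = b} := by
  rw [fib, ← Nat.card_eq_finsetCard]
  exact Nat.card_congr (Equiv.subtypeEquivRight (by simp))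

def sigmaFstFiber {I : Type*} (B : I → Type*) (t : I) : {s : Sigma B // s.1 = t} ≃ B t where
  toFun s := s.2 ▸ s.1.2
  invFun b := ⟨⟨t, b⟩, rfl⟩
  left_inv := by rintro ⟨⟨a, b⟩, rfl⟩; rfl
  right_inv b := rfl

def Arr (p q r : Composition n) : Type :=
  {M : Fin r.length → Fin q.length → Fin p.length → ℕ //
        (∀ k, ∑ i, ∑ j, M i j k = p.blocksFun k) ∧
        (∀ j, ∑ i, ∑ k, M i j k = q.blocksFun j) ∧
        (∀ i, ∑ j, ∑ k, M i j k = r.blocksFun i)}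

lemma Mof_margin_p (F : BB p q r) (k : Fin p.length) :
    ∑ i, ∑ j, Mof F i j k = p.blocksFun k := by
  have h := margin_p (JJ F) k
  rw [show (fun x => (JJ F x).2.2) = F.2.2.1 from rfl] at h
  rw [show (∑ i, ∑ j, Mof F i j k) = ∑ i, ∑ j, fib (JJ F) (i, j, k) from rfl, ← h]
  exact F.2.2.2 k

lemma Mof_margin_q (F : BB p q r) (j : Fin q.length) :
    ∑ i, ∑ k, Mof F i j k = q.blocksFun j := by
  have h := margin_q (JJ F) j
  rw [show (fun x => (JJ F x).2.1) = F.2.1.1 from rfl] at h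
  rw [show (∑ i, ∑ k, Mof F i j k) = ∑ i, ∑ k, fib (JJ F) (i, j, k) from rfl, ← h]
  exact F.2.1.2 j

lemma Mof_margin_r (F : BB p q r) (i : Fin r.length) :
    ∑ j, ∑ k, Mof F i j k = r.blocksFun i := by
  have h := margin_r (JJ F) i
  rw [show (fun x => (JJ F x).1) = F.1.1 from rfl] at h
  rw [show (∑ j, ∑ k, Mof F i j k) = ∑ j, ∑ k, fib (JJ F) (i, j, k) from rfl, ← h]
  exact F.1.2 i

def toArr (F : BB p q r) : Arr p q r :=
  ⟨Mof F, Mof_margin_p F, Mof_margin_q F, Mof_margin_r F⟩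

lemma card_orbits_eq_card_arr (p q r : Composition n) :
    Nat.card (Quotient (orbitRel (Equiv.Perm (Fin n)) (BB p q r))) = Nat.card (Arr p q r) := by
  have hlift : ∀ (a b : BB p q r),
      (orbitRel (Equiv.Perm (Fin n)) (BB p q r)).r a b → toArr a = toArr b := by
    intro a b hab
    obtain ⟨g, rfl⟩ := MulAction.mem_orbit_iff.mp hab
    exact Subtype.ext (Mof_smul g b)
  set ψ : Quotient (orbitRel (Equiv.Perm (Fin n)) (BB p q r)) → Arr p q r :=
    Quotient.lift toArr hlift with hψ
  refine Nat.card_congr (Equiv.ofBijective ψ ⟨?_, ?_⟩)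
  · -- injective
    intro qa qb
    refine Quotient.inductionOn₂ qa qb ?_
    intro a b h
    have hM : Mof a = Mof b := congrArg Subtype.val h
    have hMt : ∀ t : TrT p q r, fib (JJ a) t = fib (JJ b) t := by
      intro t
      have := congrFun (congrFun (congrFun hM t.1) t.2.1) t.2.2
      exact this
    have eqv : ∀ t : TrT p q r, {x // JJ b x = t} ≃ {x // JJ a x = t} := fun t =>
      Fintype.equivOfCardEq (by
        rw [← Nat.card_eq_fintype_card, ← Nat.card_eq_fintype_card,
          ← fib_eq_natcard, ← fib_eq_natcard, hMt])
    set σ : Equiv.Perm (Fin n) :=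
      ((Equiv.sigmaFiberEquiv (JJ b)).symm.trans
        ((Equiv.sigmaCongrRight eqv).trans (Equiv.sigmaFiberEquiv (JJ a)))) with hσdef
    have hσ : ∀ x, JJ a (σ x) = JJ b x := fun x => (eqv (JJ b x) ⟨x, rfl⟩).2
    have key : ∀ x, JJ a x = JJ b (σ⁻¹ x) := fun x => by
      rw [← hσ (σ⁻¹ x), ← Equiv.Perm.mul_apply, mul_inv_cancel, Equiv.Perm.one_apply]
    apply Quotient.sound
    refine MulAction.mem_orbit_iff.mpr ⟨σ, ?_⟩
    refine Prod.ext (Subtype.ext (funext fun x => ?_))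
      (Prod.ext (Subtype.ext (funext fun x => ?_)) (Subtype.ext (funext fun x => ?_)))
    · exact (congrArg Prod.fst (key x)).symm
    · exact (congrArg (fun t => t.2.1) (key x)).symm
    · exact (congrArg (fun t => t.2.2) (key x)).symm
  · -- surjective
    rintro ⟨M, h1, h2, h3⟩
    have htot : ∑ t : TrT p q r, M t.1 t.2.1 t.2.2 = n := by
      rw [Fintype.sum_prod_type]
      have step1 : ∀ i : Fin r.length,
          (∑ y : Fin q.length × Fin p.length, M i y.1 y.2) = ∑ k, ∑ j, M i j k := by
        intro i
        rw [Fintype.sum_prod_type]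
        exact Finset.sum_comm
      rw [Finset.sum_congr rfl fun i _ => step1 i, Finset.sum_comm]
      calc (∑ k, ∑ i, ∑ j, M i j k) = ∑ k, p.blocksFun k :=
            Finset.sum_congr rfl fun k _ => h1 k
        _ = n := p.sum_blocksFun
    have e : Fin n ≃ (Σ t : TrT p q r, Fin (M t.1 t.2.1 t.2.2)) :=
      Fintype.equivOfCardEq (by
        rw [Fintype.card_sigma, Fintype.card_fin]
        simp only [Fintype.card_fin]
        exact htot.symm)
    set G0 : Fin n → TrT p q r := fun x => (e x).1 with hG0
    have cnt : ∀ t : TrT p q r, fib G0 t = M t.1 t.2.1 t.2.2 := by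
      intro t
      rw [fib_eq_natcard]
      refine Eq.trans (Nat.card_congr
        (e.subtypeEquiv (q := fun s => s.1 = t) (fun x => Iff.rfl))) ?_
      refine Eq.trans (Nat.card_congr (sigmaFstFiber _ t)) ?_
      simp
    have hr : ∀ i, fib (fun x => (G0 x).1) i = r.blocksFun i := by
      intro i
      rw [margin_r G0 i, ← h3 i]
      exact Finset.sum_congr rfl fun j _ => Finset.sum_congr rfl fun k _ => cnt (i, j, k)
    have hq : ∀ j, fib (fun x => (G0 x).2.1) j = q.blocksFun j := by
      intro j
      rw [margin_q G0 j, ← h2 j]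
      exact Finset.sum_congr rfl fun i _ => Finset.sum_congr rfl fun k _ => cnt (i, j, k)
    have hp : ∀ k, fib (fun x => (G0 x).2.2) k = p.blocksFun k := by
      intro k
      rw [margin_p G0 k, ← h1 k]
      exact Finset.sum_congr rfl fun i _ => Finset.sum_congr rfl fun j _ => cnt (i, j, k)
    refine ⟨⟦(⟨fun x => (G0 x).1, hr⟩, ⟨fun x => (G0 x).2.1, hq⟩, ⟨fun x => (G0 x).2.2, hp⟩)⟧, ?_⟩
    apply Subtype.ext
    funext i j k
    exact cnt (i, j, k)

end ORB

section FINAL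

variable {n : ℕ}

lemma char_count (p : Composition n) (χ : n.Partition → Equiv.Perm (Fin n) → ℂ)
    (hχ : ∀ σ : Equiv.Perm (Fin n),
      pProd (fullCycleType σ) = ∑ t : n.Partition, χ t σ • schur (toYD t))
    (σ : Equiv.Perm (Fin n)) :
    (∑ t : n.Partition, χ t σ * (kostka (toYD t) p : ℂ)) =
      ((Nat.card {f : Fin n → Fin p.length // (∀ x, f (σ x) = f x) ∧
        ∀ k, fib f k = p.blocksFun k}) : ℂ) := by
  have h := congrArg (MvPowerSeries.coeff (dComp p)) (hχ σ)
  rw [pProd_fullCycleType_eq σ, coeff_prod_psum (csz σ) (csz_ne_zero σ) (dComp p), map_sum] at h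
  have hterm : ∀ t : n.Partition,
      MvPowerSeries.coeff (dComp p) (χ t σ • schur (toYD t)) =
        χ t σ * (kostka (toYD t) p : ℂ) := by
    intro t
    rw [LinearMap.map_smul, smul_eq_mul]
    congr 1
  rw [Finset.sum_congr rfl (fun t _ => hterm t)] at h
  rw [← h]
  exact_mod_cast congrArg (fun (a : ℕ) => (a : ℂ))
    ((card_phi_eq_card_inv σ (dComp p)).trans (card_inv_nat_eq_fin σ p))

lemma fixed_card (p q r : Composition n) (σ : Equiv.Perm (Fin n))
    [Fintype (fixedBy (BB p q r) σ)] :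
    Fintype.card (fixedBy (BB p q r) σ) =
      Nat.card {f : Fin n → Fin r.length // (∀ x, f (σ x) = f x) ∧
          ∀ k, fib f k = r.blocksFun k} *
        (Nat.card {f : Fin n → Fin q.length // (∀ x, f (σ x) = f x) ∧
          ∀ k, fib f k = q.blocksFun k} *
         Nat.card {f : Fin n → Fin p.length // (∀ x, f (σ x) = f x) ∧
          ∀ k, fib f k = p.blocksFun k}) := by
  rw [← Nat.card_eq_fintype_card]
  rw [Nat.card_congr ((fixedByProdEquiv σ).trans ((fixedByXsetEquiv r σ).prodCongr
    ((fixedByProdEquiv σ).trans ((fixedByXsetEquiv q σ).prodCongr (fixedByXsetEquiv p σ)))))]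
  rw [Nat.card_prod, Nat.card_prod]

end FINAL

/-- Let `χ λ` be the irreducible character of `S_n` indexed by `λ ⊢ n` (characterized,
via Frobenius, by `p_{cycletype(σ)} = Σ_λ χ^λ(σ) s_λ`). For compositions `p, q, r` of
`n`, the number of three-dimensional arrays of non-negative integers with marginal
sums `p`, `q`, `r` equals `Σ_{λ,μ,ν ⊢ n} g(λ,μ,ν) K_{λ,p} K_{μ,q} K_{ν,r}`. -/
theorem stmt10 (n : ℕ) (hn : 1 ≤ n) (p q r : Composition n)
    (χ : n.Partition → Equiv.Perm (Fin n) → ℂ)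
    (hχ : ∀ σ : Equiv.Perm (Fin n),
      pProd (fullCycleType σ) = ∑ t : n.Partition, χ t σ • schur (toYD t)) :
    (Nat.card {M : Fin r.length → Fin q.length → Fin p.length → ℕ //
        (∀ k, ∑ i, ∑ j, M i j k = p.blocksFun k) ∧
        (∀ j, ∑ i, ∑ k, M i j k = q.blocksFun j) ∧
        (∀ i, ∑ j, ∑ k, M i j k = r.blocksFun i)} : ℂ) =
      ∑ l : n.Partition, ∑ m : n.Partition, ∑ v : n.Partition,
        ((n.factorial : ℂ)⁻¹ * ∑ σ : Equiv.Perm (Fin n), χ l σ * χ m σ * χ v σ) *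
          (kostka (toYD l) p) * (kostka (toYD m) q) * (kostka (toYD v) r) := by
  classical
  haveI hft : ∀ a : Equiv.Perm (Fin n), Fintype (fixedBy (BB p q r) a) :=
    fun a => Fintype.ofFinite _
  haveI hfq : Fintype (Quotient (orbitRel (Equiv.Perm (Fin n)) (BB p q r))) :=
    Fintype.ofFinite _
  have hb := MulAction.sum_card_fixedBy_eq_card_orbits_mul_card_group
    (G := Equiv.Perm (Fin n)) (X := BB p q r)
  -- abbreviations for card counts
  set NP : Equiv.Perm (Fin n) → ℕ := fun σ => Nat.card {f : Fin n → Fin p.length //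
    (∀ x, f (σ x) = f x) ∧ ∀ k, fib f k = p.blocksFun k} with hNP
  set NQ : Equiv.Perm (Fin n) → ℕ := fun σ => Nat.card {f : Fin n → Fin q.length //
    (∀ x, f (σ x) = f x) ∧ ∀ k, fib f k = q.blocksFun k} with hNQ
  set NR : Equiv.Perm (Fin n) → ℕ := fun σ => Nat.card {f : Fin n → Fin r.length //
    (∀ x, f (σ x) = f x) ∧ ∀ k, fib f k = r.blocksFun k} with hNR
  have algebra1 : ∀ l m v : n.Partition,
      ((n.factorial : ℂ)⁻¹ * ∑ σ : Equiv.Perm (Fin n), χ l σ * χ m σ * χ v σ) *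
          (kostka (toYD l) p) * (kostka (toYD m) q) * (kostka (toYD v) r) =
      ∑ σ : Equiv.Perm (Fin n), (n.factorial : ℂ)⁻¹ *
        ((χ l σ * (kostka (toYD l) p : ℂ)) * (χ m σ * (kostka (toYD m) q : ℂ)) *
          (χ v σ * (kostka (toYD v) r : ℂ))) := by
    intro l m v
    rw [Finset.mul_sum, Finset.sum_mul, Finset.sum_mul, Finset.sum_mul]
    exact Finset.sum_congr rfl fun σ _ => by ring
  rw [Finset.sum_congr rfl (fun l _ => Finset.sum_congr rfl (fun m _ =>
    Finset.sum_congr rfl (fun v _ => algebra1 l m v)))]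
  -- swap the sum over σ to the outside
  rw [Finset.sum_congr rfl (fun l _ => Finset.sum_congr rfl (fun m _ =>
    Finset.sum_comm (s := (Finset.univ : Finset n.Partition))))]
  rw [Finset.sum_congr rfl (fun l _ =>
    Finset.sum_comm (s := (Finset.univ : Finset n.Partition)))]
  rw [Finset.sum_comm (s := (Finset.univ : Finset n.Partition))]
  -- collect the three sums per σ
  have collect : ∀ σ : Equiv.Perm (Fin n),
      (n.factorial : ℂ)⁻¹ * ((∑ l : n.Partition, χ l σ * (kostka (toYD l) p : ℂ)) *
        (∑ m : n.Partition, χ m σ * (kostka (toYD m) q : ℂ)) *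
        (∑ v : n.Partition, χ v σ * (kostka (toYD v) r : ℂ))) =
      (∑ l : n.Partition, ∑ m : n.Partition, ∑ v : n.Partition, (n.factorial : ℂ)⁻¹ *
        ((χ l σ * (kostka (toYD l) p : ℂ)) * (χ m σ * (kostka (toYD m) q : ℂ)) *
          (χ v σ * (kostka (toYD v) r : ℂ)))) := by
    intro σ
    rw [Finset.sum_mul_sum, Finset.sum_mul, Finset.mul_sum]
    refine Finset.sum_congr rfl fun l _ => ?_
    rw [Finset.sum_mul_sum, Finset.mul_sum]
    refine Finset.sum_congr rfl fun m _ => ?_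
    rw [Finset.mul_sum]
  rw [Finset.sum_congr rfl (fun σ _ => (collect σ).symm)]
  -- use the character computation
  have hcc : ∀ σ : Equiv.Perm (Fin n),
      (n.factorial : ℂ)⁻¹ * ((∑ l : n.Partition, χ l σ * (kostka (toYD l) p : ℂ)) *
        (∑ m : n.Partition, χ m σ * (kostka (toYD m) q : ℂ)) *
        (∑ v : n.Partition, χ v σ * (kostka (toYD v) r : ℂ))) =
      (n.factorial : ℂ)⁻¹ * (Fintype.card (fixedBy (BB p q r) σ) : ℂ) := by
    intro σ
    rw [char_count p χ hχ σ, char_count q χ hχ σ, char_count r χ hχ σ]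
    rw [fixed_card p q r σ]
    push_cast
    ring
  rw [Finset.sum_congr rfl (fun σ _ => hcc σ), ← Finset.mul_sum]
  have hsum : (∑ σ : Equiv.Perm (Fin n), (Fintype.card (fixedBy (BB p q r) σ) : ℂ)) =
      ((Nat.card (Arr p q r) * n.factorial : ℕ) : ℂ) := by
    rw [← Nat.cast_sum]
    congr 1
    rw [hb, ← card_orbits_eq_card_arr p q r, Nat.card_eq_fintype_card]
    congr 1
    rw [Fintype.card_perm, Fintype.card_fin]
  rw [hsum]
  have hfac : ((n.factorial : ℂ)) ≠ 0 := by
    exact_mod_cast n.factorial_ne_zero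
  push_cast
  rw [show ((Nat.card (Arr p q r) : ℂ)) = (Nat.card {M : Fin r.length → Fin q.length →
      Fin p.length → ℕ //
        (∀ k, ∑ i, ∑ j, M i j k = p.blocksFun k) ∧
        (∀ j, ∑ i, ∑ k, M i j k = q.blocksFun j) ∧
        (∀ i, ∑ j, ∑ k, M i j k = r.blocksFun i)} : ℂ) from rfl]
  field_simp
end
end
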